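/- arXiv:1201.4899 — 9 statements merged into one kernel-verified Lean document; each statement's English description precedes it below -/
import Mathlib

section
/- Let S be a (θ,α,β)-self-determined community in an affinity system on a finite set V, let γ = α − β, and let M = ⌈ln(16/γ)/α⌉. Then there exists a set U ⊆ S with |U| ≤ M such that the set S₁ = {i ∈ V : ∃ s ∈ U with i ∈ π_s(1:⌈θ|S|⌉)} satisfies |S \ S₁| ≤ (γ/16)|S|. -/
open Finset

def topSet (n : ℕ) (π : Fin n → Equiv.Perm (Fin n)) (s : Fin n) (t : ℕ) : Finset (Fin n) :=
  Finset.univ.filter (fun x => ((π s).symm x : ℕ) < t)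

def votes (n : ℕ) (π : Fin n → Equiv.Perm (Fin n)) (S : Finset (Fin n)) (t : ℕ)
    (i : Fin n) : ℕ :=
  (S.filter (fun s => i ∈ topSet n π s t)).card

def IsCommunity (n : ℕ) (π : Fin n → Equiv.Perm (Fin n)) (θ α β : ℝ)
    (S : Finset (Fin n)) : Prop :=
  (∀ i ∈ S, α * S.card ≤ (votes n π S ⌈θ * S.card⌉₊ i : ℝ)) ∧
  (∀ j, j ∉ S → (votes n π S ⌈θ * S.card⌉₊ j : ℝ) ≤ β * S.card)

/-!
Greedy covering. Every member of `S` is voted for by at least `α |S|` members of `S`, so by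
averaging some member of `S` votes for at least an `α`-fraction of the members not yet covered.
Picking such a voter `M` times leaves at most `(1 - α)^M |S| ≤ e^{-αM} |S| ≤ (γ/16) |S|`
members uncovered.
-/

theorem exists_mul_card_le_card_inter {ι V : Type*} [DecidableEq V] (T : ι → Finset V)
    {A : Finset ι} {R : Finset V} {α : ℝ} (hA : A.Nonempty)
    (hR : ∀ b ∈ R, α * #A ≤ #{a ∈ A | b ∈ T a}) :
    ∃ a ∈ A, α * #R ≤ #(R ∩ T a) := by
  refine exists_le_of_sum_le hA ?_
  calc ∑ _a ∈ A, α * #R = ∑ _b ∈ R, α * #A := by simp only [sum_const, nsmul_eq_mul]; ring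
    _ ≤ ∑ b ∈ R, (#{a ∈ A | b ∈ T a} : ℝ) := sum_le_sum hR
    _ = ∑ a ∈ A, (#(R ∩ T a) : ℝ) := by
      simp_rw [← filter_mem_eq_inter]
      exact_mod_cast (sum_card_bipartiteAbove_eq_sum_card_bipartiteBelow (fun a b => b ∈ T a)).symm

theorem one_sub_pow_ceil_log_div_le_inv {α x : ℝ} (hα₀ : 0 < α) (hα₁ : α ≤ 1) (hx : 0 < x) :
    (1 - α) ^ ⌈Real.log x / α⌉₊ ≤ x⁻¹ := by
  have hlog : Real.log x ≤ α * ⌈Real.log x / α⌉₊ := by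
    rw [← div_le_iff₀' hα₀]; exact Nat.le_ceil _
  calc (1 - α) ^ ⌈Real.log x / α⌉₊ ≤ Real.exp (-α) ^ ⌈Real.log x / α⌉₊ :=
        pow_le_pow_left₀ (by linarith) (Real.one_sub_le_exp_neg α) _
    _ = Real.exp (-(α * ⌈Real.log x / α⌉₊)) := by rw [← Real.exp_nat_mul]; ring_nf
    _ ≤ Real.exp (-Real.log x) := Real.exp_le_exp.mpr (neg_le_neg hlog)
    _ = x⁻¹ := by rw [Real.exp_neg, Real.exp_log hx]

theorem exists_subset_card_sdiff_biUnion_le_pow {ι : Type*} [DecidableEq ι] (T : ι → Finset ι)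
    {S : Finset ι} {α : ℝ} (hα : α ≤ 1) (hS : ∀ i ∈ S, α * #S ≤ #{s ∈ S | i ∈ T s}) (k : ℕ) :
    ∃ U ⊆ S, #U ≤ k ∧ (#(S \ U.biUnion T) : ℝ) ≤ (1 - α) ^ k * #S := by
  induction k with
  | zero => exact ⟨∅, empty_subset S, le_rfl, by simp⟩
  | succ k ih =>
    obtain ⟨U, hUS, hUk, hU⟩ := ih
    set R := S \ U.biUnion T
    rcases R.eq_empty_or_nonempty with hR | hR
    · refine ⟨U, hUS, hUk.trans k.le_succ, ?_⟩
      have : 0 ≤ 1 - α := by linarith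
      change (#R : ℝ) ≤ _
      rw [hR, card_empty, Nat.cast_zero]
      positivity
    obtain ⟨a, haS, ha⟩ := exists_mul_card_le_card_inter T (R := R) (hR.mono sdiff_subset)
      (fun i hi => hS i (sdiff_subset hi))
    refine ⟨insert a U, insert_subset haS hUS, (card_insert_le a U).trans (by omega), ?_⟩
    have hsplit : S \ (insert a U).biUnion T = R \ T a := by
      rw [biUnion_insert, union_comm, sdiff_sdiff_left]; rfl
    have hcard : (#(R \ T a) : ℝ) = #R - #(R ∩ T a) := by
      rw [eq_sub_iff_add_eq]; exact_mod_cast card_sdiff_add_card_inter R (T a)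
    calc (#(S \ (insert a U).biUnion T) : ℝ) = #R - #(R ∩ T a) := by rw [hsplit, hcard]
      _ ≤ (1 - α) * #R := by linarith
      _ ≤ (1 - α) * ((1 - α) ^ k * #S) := mul_le_mul_of_nonneg_left hU (by linarith)
      _ = (1 - α) ^ (k + 1) * #S := by ring

theorem stmt_1_general (n : ℕ) (π : Fin n → Equiv.Perm (Fin n)) (θ α β γ : ℝ)
    (hβ : 0 ≤ β) (hβα : β < α) (hα : α ≤ 1) (hγ : γ = α - β)
    (S : Finset (Fin n)) (hS : IsCommunity n π θ α β S)
    (M : ℕ) (hM : M = ⌈Real.log (16 / γ) / α⌉₊) :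
    ∃ U ⊆ S, U.card ≤ M ∧
      (((S \ (Finset.univ.filter (fun i => ∃ s ∈ U, i ∈ topSet n π s ⌈θ * S.card⌉₊))).card : ℝ)
        ≤ (γ / 16) * S.card) := by
  have hα₀ : 0 < α := hβ.trans_lt hβα
  have hγ₀ : 0 < γ := by linarith
  set t := ⌈θ * S.card⌉₊
  obtain ⟨U, hUS, hUM, hU⟩ := exists_subset_card_sdiff_biUnion_le_pow (topSet n π · t) hα hS.1 M
  have hcover :
      univ.filter (fun i => ∃ s ∈ U, i ∈ topSet n π s t) = U.biUnion (topSet n π · t) := by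
    ext; simp
  refine ⟨U, hUS, hUM, ?_⟩
  rw [hcover]
  calc _ ≤ (1 - α) ^ M * #S := hU
    _ ≤ γ / 16 * #S := by
      gcongr
      rw [hM, ← inv_div 16 γ]
      exact one_sub_pow_ceil_log_div_le_inv hα₀ hα (by positivity)

theorem stmt_1 (n : ℕ) (π : Fin n → Equiv.Perm (Fin n)) (θ α β γ : ℝ)
    (hθ : 0 < θ) (hβ : 0 ≤ β) (hβα : β < α) (hα : α ≤ 1) (hγ : γ = α - β)
    (S : Finset (Fin n)) (hS : IsCommunity n π θ α β S)
    (M : ℕ) (hM : M = ⌈Real.log (16 / γ) / α⌉₊) :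
    ∃ U ⊆ S, U.card ≤ M ∧
      (((S \ (Finset.univ.filter (fun i => ∃ s ∈ U, i ∈ topSet n π s ⌈θ * S.card⌉₊))).card : ℝ)
        ≤ (γ / 16) * S.card) :=
  stmt_1_general n π θ α β γ hβ hβα hα hγ S hS M hM
end

section
/- Fix a (θ,α,β)-self-determined community S with γ = α − β and t = |S|, and let S₁ ⊆ V satisfy |S₁| ≤ Mθt (for some M ≥ 1) and |S \ S₁| ≤ γt/16; set S̃ = S ∩ S₁. Then: (1) every i ∈ S̃ is voted for (with respect to community size t) by at least an (α − γ/16) fraction of the members of S̃; and (2) every j ∈ S₁ \ S is voted for by at most an (α − 3γ/4) fraction of the members of S̃. -/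
open Finset

/-! Let `T = S ∩ S₁` and `d = |S \ S₁| ≤ γt/16`. Dropping the `d` members of `S` outside `S₁`
costs any candidate at most `d` votes, so a member of `S` keeps at least `αt - d ≥ (α - γ/16)t`
votes from `T`, while an outsider still has at most `βt` of them. Since `|T| = t - d` and
`α ≤ 1`, the bound `βt` is at most `(β + γ/4)(t - d) = (α - 3γ/4)|T|`. -/

section Votes

variable {n : ℕ} {π : Fin n → Equiv.Perm (Fin n)}

theorem votes_mono {S S' : Finset (Fin n)} (h : S ⊆ S') (t : ℕ) (i : Fin n) :
    votes n π S t i ≤ votes n π S' t i :=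
  card_le_card (filter_subset_filter _ h)

theorem votes_le_votes_inter_add_card_sdiff (S A : Finset (Fin n)) (t : ℕ) (i : Fin n) :
    votes n π S t i ≤ votes n π (S ∩ A) t i + (S \ A).card := by
  unfold votes
  calc (S.filter fun s => i ∈ topSet n π s t).card
      ≤ ((S ∩ A).filter (fun s => i ∈ topSet n π s t) ∪ S \ A).card := by
        refine card_le_card fun x hx => ?_
        simp only [mem_filter, mem_union, mem_inter, mem_sdiff] at hx ⊢
        tauto
    _ ≤ _ := card_union_le _ _

variable {θ α β : ℝ} {S : Finset (Fin n)}

theorem IsCommunity.le_votes_inter (hS : IsCommunity n π θ α β S) {A : Finset (Fin n)}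
    (hcover : ((S \ A).card : ℝ) ≤ (α - β) * S.card / 16) {i : Fin n} (hi : i ∈ S) :
    (α - (α - β) / 16) * (S ∩ A).card ≤ votes n π (S ∩ A) ⌈θ * S.card⌉₊ i := by
  have hvotes := hS.1 i hi
  have hsplit : (votes n π S ⌈θ * S.card⌉₊ i : ℝ) ≤
      votes n π (S ∩ A) ⌈θ * S.card⌉₊ i + (S \ A).card := by
    exact_mod_cast votes_le_votes_inter_add_card_sdiff S A _ i
  rcases le_total (α - (α - β) / 16) 0 with hc | hc
  · exact (mul_nonpos_of_nonpos_of_nonneg hc (Nat.cast_nonneg _)).trans (Nat.cast_nonneg _)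
  · have hT : ((S ∩ A).card : ℝ) ≤ S.card := by
      exact_mod_cast card_le_card inter_subset_left
    calc (α - (α - β) / 16) * (S ∩ A).card
        ≤ (α - (α - β) / 16) * S.card := mul_le_mul_of_nonneg_left hT hc
      _ ≤ _ := by linarith

theorem IsCommunity.votes_inter_le (hS : IsCommunity n π θ α β S) (hβα : β ≤ α)
    (hα : α ≤ 1) {A : Finset (Fin n)} (hcover : ((S \ A).card : ℝ) ≤ (α - β) * S.card / 16)
    {j : Fin n} (hj : j ∉ S) :
    votes n π (S ∩ A) ⌈θ * S.card⌉₊ j ≤ (α - 3 * (α - β) / 4) * (S ∩ A).card := by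
  have hvotes : (votes n π (S ∩ A) ⌈θ * S.card⌉₊ j : ℝ) ≤ β * S.card :=
    (Nat.cast_le.2 (votes_mono inter_subset_left _ j)).trans (hS.2 j hj)
  have hcard : ((S ∩ A).card : ℝ) = S.card - (S \ A).card := by
    rw [eq_sub_iff_add_eq]
    exact_mod_cast card_inter_add_card_sdiff S A
  have hd : (0 : ℝ) ≤ (S \ A).card := Nat.cast_nonneg _
  -- `α - 3γ/4 = β + γ/4 ≤ α ≤ 1`, so the loss is at most `d ≤ γt/16`.
  have hloss : (α - 3 * (α - β) / 4) * (S \ A).card ≤ (α - β) * S.card / 4 := by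
    rcases le_total (α - 3 * (α - β) / 4) 0 with hc | hc
    · have hγt : 0 ≤ (α - β) * S.card / 4 := by
        have := sub_nonneg.2 hβα
        positivity
      exact (mul_nonpos_of_nonpos_of_nonneg hc hd).trans hγt
    · calc (α - 3 * (α - β) / 4) * (S \ A).card ≤ 1 * (S \ A).card :=
            mul_le_mul_of_nonneg_right (by linarith) hd
        _ ≤ _ := by linarith
  rw [hcard]
  linarith

end Votes

theorem stmt_2_general (n : ℕ) (π : Fin n → Equiv.Perm (Fin n)) (θ α β γ : ℝ)
    (hβα : β < α) (hα : α ≤ 1) (hγ : γ = α - β)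
    (S S₁ : Finset (Fin n)) (t : ℕ) (ht : t = S.card)
    (hS : IsCommunity n π θ α β S)
    (hcover : ((S \ S₁).card : ℝ) ≤ γ * t / 16) :
    (∀ i ∈ S ∩ S₁,
      (α - γ / 16) * ((S ∩ S₁).card : ℝ) ≤
        (((S ∩ S₁).filter (fun s => i ∈ topSet n π s ⌈θ * (t : ℝ)⌉₊)).card : ℝ)) ∧
    (∀ j ∈ S₁ \ S,
      (((S ∩ S₁).filter (fun s => j ∈ topSet n π s ⌈θ * (t : ℝ)⌉₊)).card : ℝ) ≤
        (α - 3 * γ / 4) * ((S ∩ S₁).card : ℝ)) := by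
  subst ht hγ
  exact ⟨fun i hi => hS.le_votes_inter hcover (mem_of_mem_inter_left hi),
    fun j hj => hS.votes_inter_le hβα.le hα hcover (mem_sdiff.1 hj).2⟩

theorem stmt_2 (n : ℕ) (π : Fin n → Equiv.Perm (Fin n)) (θ α β γ : ℝ)
    (hθ : 0 < θ) (hβ : 0 ≤ β) (hβα : β < α) (hα : α ≤ 1) (hγ : γ = α - β)
    (S S₁ : Finset (Fin n)) (t : ℕ) (ht : t = S.card)
    (hS : IsCommunity n π θ α β S)
    (M : ℝ) (hM : 1 ≤ M)
    (hS₁card : (S₁.card : ℝ) ≤ M * θ * t)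
    (hcover : ((S \ S₁).card : ℝ) ≤ γ * t / 16) :
    (∀ i ∈ S ∩ S₁,
      (α - γ / 16) * ((S ∩ S₁).card : ℝ) ≤
        (((S ∩ S₁).filter (fun s => i ∈ topSet n π s ⌈θ * (t : ℝ)⌉₊)).card : ℝ)) ∧
    (∀ j ∈ S₁ \ S,
      (((S ∩ S₁).filter (fun s => j ∈ topSet n π s ⌈θ * (t : ℝ)⌉₊)).card : ℝ) ≤
        (α - 3 * γ / 4) * ((S ∩ S₁).card : ℝ)) :=
  stmt_2_general n π θ α β γ hβα hα hγ S S₁ t ht hS hcover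
end

section
/- Let S be a (θ,α,β)-self-determined community in an affinity system on n elements, with γ = α − β, and let k = ⌈2 ln(4n)/γ²⌉. If U is a multiset of k members drawn independently and uniformly at random from S, then with probability at least 1/2 the set {i ∈ V : v^{⌈θ|S|⌉}_U(i) ≥ (α − γ/2)k} (votes counted with multiplicity) is identical to S. -/
open Finset

/-- The number of coordinates of the tuple `u` (draws counted with multiplicity) whose
top-`T` list contains `i`. -/
def tupleVotes (n : ℕ) (π : Fin n → Equiv.Perm (Fin n)) (k : ℕ) (u : Fin k → Fin n)
    (T : ℕ) (i : Fin n) : ℕ :=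
  (Finset.univ.filter (fun j : Fin k => i ∈ topSet n π (u j) T)).card

/-! Fix `i`. Its vote count in a sample `u ∈ S^k` is a sum of `k` independent indicators whose
mean is `φ(i)/|S|`, at least `α` for `i ∈ S` and at most `β` for `i ∉ S`. Hoeffding's lemma for
the uniform draw from `S` and the Chernoff bound put the count on the wrong side of the
threshold `(α - γ/2) k` with probability at most `exp (-γ² k / 2) ≤ 1 / (4n)`, so a union bound
over `i` gives failure probability at most `1/4`. Probabilities are counted as numbers of
tuples in `S^k`, out of `|S|^k`. -/

section Concentration

open MeasureTheory ProbabilityTheory Real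

variable {α ι : Type*}

theorem Finset.sum_exp_mul_le_of_mem_Icc (S : Finset α) (g : α → ℝ)
    (hg : ∀ x ∈ S, g x ∈ Set.Icc 0 1) (l : ℝ) :
    ∑ x ∈ S, exp (l * g x) ≤ #S * exp (l * ((∑ x ∈ S, g x) / #S) + l ^ 2 / 8) := by
  rcases S.eq_empty_or_nonempty with rfl | hS
  · simp
  have : Nonempty S := hS.to_subtype
  let _ : MeasurableSpace S := ⊤
  let μ : Measure S := uniformOn Set.univ
  have hμ (f : α → ℝ) : ∫ x : S, f x ∂μ = (∑ x ∈ S, f x) / #S := by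
    rw [integral_fintype .of_finite]
    simp [μ, uniformOn_univ, measureReal_def, Finset.mul_sum, div_eq_inv_mul,
      Finset.sum_attach S (fun x => (#S : ℝ)⁻¹ * f x)]
  set m := (∑ x ∈ S, g x) / #S
  have hoeffding := (hasSubgaussianMGF_of_mem_Icc (X := fun x : S => g x) (μ := μ)
    Measurable.of_discrete.aemeasurable (ae_of_all μ fun x : S => hg x x.2)).mgf_le l
  rw [mgf, hμ g, hμ fun x => exp (l * (g x - m))] at hoeffding
  have hS' : (0 : ℝ) < #S := by exact_mod_cast hS.card_pos
  calc ∑ x ∈ S, exp (l * g x) = exp (l * m) * ∑ x ∈ S, exp (l * (g x - m)) := by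
        rw [Finset.mul_sum]
        refine Finset.sum_congr rfl fun x _ => ?_
        rw [← exp_add]; ring_nf
    _ ≤ exp (l * m) * (#S * exp (l ^ 2 / 8)) := by
        gcongr
        rw [div_le_iff₀ hS'] at hoeffding
        norm_num at hoeffding
        rwa [show 1 / 4 * l ^ 2 / 2 = l ^ 2 / 8 by ring, mul_comm] at hoeffding
    _ = _ := by rw [exp_add]; ring

/-- `p` bounds the mean of `g` on `S` from the side selected by the sign of `l`. -/
theorem Finset.sum_exp_mul_le_of_mul_sum_le (S : Finset α) (g : α → ℝ)
    (hg : ∀ x ∈ S, g x ∈ Set.Icc 0 1) (l p : ℝ) (hp : l * ∑ x ∈ S, g x ≤ l * (p * #S)) :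
    ∑ x ∈ S, exp (l * g x) ≤ #S * exp (l * p + l ^ 2 / 8) := by
  rcases S.eq_empty_or_nonempty with rfl | hS
  · simp
  have hS' : (0 : ℝ) < #S := by exact_mod_cast hS.card_pos
  refine (S.sum_exp_mul_le_of_mem_Icc g hg l).trans ?_
  refine mul_le_mul_of_nonneg_left (exp_le_exp.2 ?_) hS'.le
  rw [mul_div_assoc']
  gcongr
  rw [div_le_iff₀ hS']
  linarith

variable [Fintype ι] [DecidableEq ι]

theorem Finset.sum_piFinset_exp_mul_sum (S : Finset α) (g : α → ℝ) (l : ℝ) :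
    ∑ u ∈ Fintype.piFinset (fun _ : ι => S), exp (l * ∑ j, g (u j)) =
      (∑ x ∈ S, exp (l * g x)) ^ Fintype.card ι := by
  simp_rw [Finset.mul_sum, exp_sum]
  rw [← Finset.prod_univ_sum (t := fun _ : ι => S) (f := fun _ x => exp (l * g x)),
    Finset.prod_const, Finset.card_univ]

theorem Finset.card_filter_piFinset_le_exp (S : Finset α) (g : α → ℝ)
    (hg : ∀ x ∈ S, g x ∈ Set.Icc 0 1) (l p a : ℝ) (hp : l * ∑ x ∈ S, g x ≤ l * (p * #S)) :
    (#{u ∈ Fintype.piFinset (fun _ : ι => S) | l * a ≤ l * ∑ j, g (u j)} : ℝ) ≤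
      #S ^ Fintype.card ι * exp (Fintype.card ι * (l * p + l ^ 2 / 8) - l * a) := by
  have markov : #{u ∈ Fintype.piFinset (fun _ : ι => S) | l * a ≤ l * ∑ j, g (u j)} *
      exp (l * a) ≤ ∑ u ∈ Fintype.piFinset (fun _ : ι => S), exp (l * ∑ j, g (u j)) :=
    calc _ = ∑ u ∈ Fintype.piFinset (fun _ : ι => S) with l * a ≤ l * ∑ j, g (u j),
            exp (l * a) := by rw [sum_const, nsmul_eq_mul]
      _ ≤ ∑ u ∈ Fintype.piFinset (fun _ : ι => S) with l * a ≤ l * ∑ j, g (u j),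
            exp (l * ∑ j, g (u j)) := sum_le_sum fun u hu => exp_le_exp.2 (mem_filter.1 hu).2
      _ ≤ _ := sum_le_sum_of_subset_of_nonneg (filter_subset _ _) fun _ _ _ => (exp_pos _).le
  rw [S.sum_piFinset_exp_mul_sum] at markov
  have mgf := pow_le_pow_left₀ (sum_nonneg fun _ _ => (exp_pos _).le)
    (S.sum_exp_mul_le_of_mul_sum_le g hg l p hp) (Fintype.card ι)
  rw [mul_pow, ← exp_nat_mul] at mgf
  rw [sub_eq_add_neg, exp_add, exp_neg, ← mul_assoc, ← div_eq_mul_inv, le_div_iff₀ (exp_pos _)]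
  exact markov.trans mgf

theorem Finset.card_filter_piFinset_le_of_sum_le (S : Finset α) (g : α → ℝ)
    (hg : ∀ x ∈ S, g x ∈ Set.Icc 0 1) {p t : ℝ} (ht : 0 ≤ t) (hp : ∑ x ∈ S, g x ≤ p * #S) :
    (#{u ∈ Fintype.piFinset (fun _ : ι => S) | (p + t) * Fintype.card ι ≤ ∑ j, g (u j)} : ℝ) ≤
      #S ^ Fintype.card ι * exp (-2 * t ^ 2 * Fintype.card ι) := by
  calc _ ≤ (#{u ∈ Fintype.piFinset (fun _ : ι => S) |
          4 * t * ((p + t) * Fintype.card ι) ≤ 4 * t * ∑ j, g (u j)} : ℝ) := by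
        exact_mod_cast card_le_card <| monotone_filter_right _ fun u _ hu =>
          mul_le_mul_of_nonneg_left hu (by positivity)
    _ ≤ _ := S.card_filter_piFinset_le_exp g hg (4 * t) p _ (by gcongr)
    _ = _ := by ring_nf

theorem Finset.card_filter_piFinset_le_of_le_sum (S : Finset α) (g : α → ℝ)
    (hg : ∀ x ∈ S, g x ∈ Set.Icc 0 1) {p t : ℝ} (ht : 0 ≤ t) (hp : p * #S ≤ ∑ x ∈ S, g x) :
    (#{u ∈ Fintype.piFinset (fun _ : ι => S) | ∑ j, g (u j) ≤ (p - t) * Fintype.card ι} : ℝ) ≤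
      #S ^ Fintype.card ι * exp (-2 * t ^ 2 * Fintype.card ι) := by
  calc _ ≤ (#{u ∈ Fintype.piFinset (fun _ : ι => S) |
          -(4 * t) * ((p - t) * Fintype.card ι) ≤ -(4 * t) * ∑ j, g (u j)} : ℝ) := by
        exact_mod_cast card_le_card <| monotone_filter_right _ fun u _ hu =>
          mul_le_mul_of_nonpos_left hu (by linarith)
    _ ≤ _ := S.card_filter_piFinset_le_exp g hg (-(4 * t)) p _
          (mul_le_mul_of_nonpos_left hp (by linarith))
    _ = _ := by ring_nf

end Concentration

theorem Real.exp_neg_mul_ceil_le_inv {x γ : ℝ} (hx : 0 < x) (hγ : γ ≠ 0) :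
    Real.exp (-2 * (γ / 2) ^ 2 * ⌈2 * Real.log x / γ ^ 2⌉₊) ≤ x⁻¹ := by
  have hk := Nat.le_ceil (2 * Real.log x / γ ^ 2)
  rw [div_le_iff₀ (by positivity)] at hk
  calc _ ≤ Real.exp (-Real.log x) := Real.exp_le_exp.2 (by linarith)
    _ = x⁻¹ := by rw [Real.exp_neg, Real.exp_log hx]

theorem Finset.card_filter_not_filter_eq_le_sum {β γ : Type*} [Fintype γ] [DecidableEq γ]
    (A : Finset β) (P : β → γ → Prop) [∀ u, DecidablePred (P u)] (S : Finset γ) :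
    #{u ∈ A | ¬ univ.filter (P u) = S} ≤ ∑ i, #{u ∈ A | ¬(P u i ↔ i ∈ S)} := by
  classical
  refine (card_le_card fun u hu => ?_).trans card_biUnion_le
  obtain ⟨huA, hu⟩ := mem_filter.1 hu
  obtain ⟨i, hi⟩ := not_forall.1 (mt Finset.ext hu)
  exact mem_biUnion.2 ⟨i, mem_univ i, mem_filter.2 ⟨huA, by simpa using hi⟩⟩

theorem votes_eq_sum (n : ℕ) (π : Fin n → Equiv.Perm (Fin n)) (S : Finset (Fin n)) (t : ℕ)
    (i : Fin n) : (votes n π S t i : ℝ) = ∑ s ∈ S, if i ∈ topSet n π s t then 1 else 0 := by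
  simp [votes, sum_boole]

theorem tupleVotes_eq_sum (n : ℕ) (π : Fin n → Equiv.Perm (Fin n)) (k : ℕ) (u : Fin k → Fin n)
    (t : ℕ) (i : Fin n) :
    (tupleVotes n π k u t i : ℝ) = ∑ j, if i ∈ topSet n π (u j) t then 1 else 0 := by
  simp [tupleVotes, sum_boole]

theorem IsCommunity.card_filter_misclassified_le {n : ℕ} {π : Fin n → Equiv.Perm (Fin n)}
    {θ α β : ℝ} {S : Finset (Fin n)} (hS : IsCommunity n π θ α β S) {c t : ℝ} (ht : 0 ≤ t)
    (hβc : β + t ≤ c) (hcα : c ≤ α - t) (k : ℕ) (i : Fin n) :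
    (#{u ∈ Fintype.piFinset (fun _ : Fin k => S) |
        ¬(c * k ≤ (tupleVotes n π k u ⌈θ * #S⌉₊ i : ℝ) ↔ i ∈ S)} : ℝ) ≤
      #S ^ k * Real.exp (-2 * t ^ 2 * k) := by
  set g : Fin n → ℝ := fun s => if i ∈ topSet n π s ⌈θ * #S⌉₊ then 1 else 0
  have hg : ∀ s ∈ S, g s ∈ Set.Icc 0 1 := fun s _ => by
    simp only [g]; split_ifs <;> norm_num
  have hk : (0 : ℝ) ≤ k := k.cast_nonneg
  by_cases hi : i ∈ S
  · calc _ ≤ (#{u ∈ Fintype.piFinset (fun _ : Fin k => S) |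
            ∑ j, g (u j) ≤ (α - t) * k} : ℝ) := by
          refine Nat.cast_le.2 (card_le_card (monotone_filter_right _ fun u _ hu => ?_))
          simp only [hi, iff_true, not_le] at hu
          rw [← tupleVotes_eq_sum]
          nlinarith
      _ ≤ _ := by
          have h := S.card_filter_piFinset_le_of_le_sum (ι := Fin k) g hg ht (p := α)
            (by rw [← votes_eq_sum]; exact hS.1 i hi)
          rwa [Fintype.card_fin] at h
  · calc _ ≤ (#{u ∈ Fintype.piFinset (fun _ : Fin k => S) |
            (β + t) * k ≤ ∑ j, g (u j)} : ℝ) := by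
          refine Nat.cast_le.2 (card_le_card (monotone_filter_right _ fun u _ hu => ?_))
          simp only [hi, iff_false, not_not] at hu
          rw [← tupleVotes_eq_sum]
          nlinarith
      _ ≤ _ := by
          have h := S.card_filter_piFinset_le_of_sum_le (ι := Fin k) g hg ht (p := β)
            (by rw [← votes_eq_sum]; exact hS.2 i hi)
          rwa [Fintype.card_fin] at h

theorem stmt_5_general (n : ℕ) (π : Fin n → Equiv.Perm (Fin n)) (θ α β γ : ℝ)
    (hβα : β < α) (hγ : γ = α - β)
    (S : Finset (Fin n)) (hS : IsCommunity n π θ α β S)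
    (k : ℕ) (hk : k = ⌈2 * Real.log (4 * n) / γ ^ 2⌉₊) :
    (1 / 2 : ℝ) *
      (((Finset.univ : Finset (Fin k → Fin n)).filter
          (fun u => ∀ j, u j ∈ S)).card : ℝ) ≤
    (((Finset.univ : Finset (Fin k → Fin n)).filter
        (fun u => (∀ j, u j ∈ S) ∧
          Finset.univ.filter (fun i =>
            (α - γ / 2) * k ≤ (tupleVotes n π k u ⌈θ * S.card⌉₊ i : ℝ)) = S)).card : ℝ) := by
  set A := Fintype.piFinset fun _ : Fin k => S
  set P : (Fin k → Fin n) → Fin n → Prop := fun u i =>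
    (α - γ / 2) * k ≤ (tupleVotes n π k u ⌈θ * #S⌉₊ i : ℝ)
  have hA : univ.filter (fun u : Fin k → Fin n => ∀ j, u j ∈ S) = A := by
    ext; simp [A]
  have hgood : univ.filter (fun u => (∀ j, u j ∈ S) ∧ univ.filter (P u) = S) =
      A.filter (fun u => univ.filter (P u) = S) := by
    ext; simp [A]
  have hmis (i : Fin n) : (#{u ∈ A | ¬(P u i ↔ i ∈ S)} : ℝ) ≤ #S ^ k * (4 * n : ℝ)⁻¹ := by
    have hn : (0 : ℝ) < 4 * n := by have := i.pos; positivity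
    refine (hS.card_filter_misclassified_le (c := α - γ / 2) (t := γ / 2) (by linarith)
      (by linarith) le_rfl k i).trans ?_
    gcongr
    rw [hk]
    exact Real.exp_neg_mul_ceil_le_inv hn (by linarith)
  have hbad : (#{u ∈ A | ¬ univ.filter (P u) = S} : ℝ) ≤ #S ^ k / 4 :=
    calc _ ≤ ∑ i, (#{u ∈ A | ¬(P u i ↔ i ∈ S)} : ℝ) :=
          mod_cast A.card_filter_not_filter_eq_le_sum P S
      _ ≤ ∑ _i : Fin n, (#S : ℝ) ^ k * (4 * n : ℝ)⁻¹ := sum_le_sum fun i _ => hmis i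
      _ = #S ^ k / 4 * (n * (n : ℝ)⁻¹) := by
          rw [sum_const, card_univ, Fintype.card_fin, nsmul_eq_mul, mul_inv]; ring
      _ ≤ #S ^ k / 4 := mul_le_of_le_one_right (by positivity) mul_inv_le_one
  have hAcard : (#A : ℝ) = #S ^ k := by simp [A]
  have hsplit : (#{u ∈ A | univ.filter (P u) = S} : ℝ) + #{u ∈ A | ¬ univ.filter (P u) = S} =
      #A := mod_cast card_filter_add_card_filter_not _
  rw [hA, hgood]
  linarith

theorem stmt_5 (n : ℕ) (π : Fin n → Equiv.Perm (Fin n)) (θ α β γ : ℝ)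
    (hθ : 0 < θ) (hβ : 0 ≤ β) (hβα : β < α) (hα : α ≤ 1) (hγ : γ = α - β)
    (S : Finset (Fin n)) (hS : IsCommunity n π θ α β S)
    (k : ℕ) (hk : k = ⌈2 * Real.log (4 * n) / γ ^ 2⌉₊) :
    (1 / 2 : ℝ) *
      (((Finset.univ : Finset (Fin k → Fin n)).filter
          (fun u => ∀ j, u j ∈ S)).card : ℝ) ≤
    (((Finset.univ : Finset (Fin k → Fin n)).filter
        (fun u => (∀ j, u j ∈ S) ∧
          Finset.univ.filter (fun i =>
            (α - γ / 2) * k ≤ (tupleVotes n π k u ⌈θ * S.card⌉₊ i : ℝ)) = S)).card : ℝ) :=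
  stmt_5_general n π θ α β γ hβα hγ S hS k hk
end

section
/- Let θ ≥ 1 be a constant, let n be a perfect square, and let l be an integer with 2 ≤ l ≤ n^{1/4}/(2√θ). Then for all sufficiently large n there exists an affinity system on n elements, whose element set is partitioned into √n blobs of size √n each, such that every union of l distinct blobs is a (θ, α, β)-self-determined community with α = 1/l and β = 1/(2l) (so γ = α − β = α/2). Consequently, the number of (θ, 1/l, 1/(2l))-self-determined communities in this system is at least C(√n, l) ≥ n^{l/4}, i.e. n^{Ω(1/α)}. -/
open Finset

/-!
Write `x : Fin (m ^ 2)` as `x = m * b + k` with `b, k : Fin m`; the blobs are the fibres of `b`.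
Voter `(b, k)` ranks the elements blob by blob, keeping the order inside each blob, and gives
blob `c` the slot `σ c` where `σ = swap 0 k ∘ (· + (k - b))`, so its own blob comes first.

For a union `S` of `l` blobs and `t = ⌈θ l m⌉ ≥ m`, every member of `S` gets the `m = α |S|` votes
of its own blob. An outsider in blob `c` is in the top `t` of voter `(b, k)` only if `σ c` is one of
the `⌊(t - 1) / m⌋` nonzero slots `e` with `m e < t`; as `k ↦ c + (k - b)` is a bijection and the
swap alters it for a single `k`, each blob of `S` casts at most `⌊(t - 1) / m⌋ + 1` votes for it, in
total at most `l (θ l + 1) ≤ m / 2 = β |S|` once `4 θ l² ≤ m`. Distinct sets of blobs give distinct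
communities, and `C(m, l) ≥ ((m + 1 - l) / l) ^ l ≥ √m ^ l = n ^ (l / 4)`.
-/

section Blobs

variable {m : ℕ}

def blobDigits (m : ℕ) : Fin (m ^ 2) ≃ Fin m × Fin m :=
  (finCongr (sq m)).trans finProdFinEquiv.symm

lemma val_blobDigits_symm (p : Fin m × Fin m) :
    ((blobDigits m).symm p : ℕ) = p.2 + m * p.1 := by
  simp [blobDigits]

def blob (m : ℕ) (b : Fin m) : Finset (Fin (m ^ 2)) :=
  univ.filter fun x => (blobDigits m x).1 = b

lemma biUnion_blob (T : Finset (Fin m)) :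
    T.biUnion (blob m) = univ.filter fun x => (blobDigits m x).1 ∈ T := by
  ext x
  simp [blob]

lemma blob_eq_map (b : Fin m) :
    blob m b = ({b} ×ˢ univ).map (blobDigits m).symm.toEmbedding := by
  ext x
  simp [blob, eq_comm, Prod.ext_iff]

lemma card_blob (b : Fin m) : (blob m b).card = m := by
  simp [blob_eq_map]

lemma disjoint_blob {b b' : Fin m} (h : b ≠ b') : Disjoint (blob m b) (blob m b') := by
  simp only [blob, disjoint_filter]
  intro x _ hx
  rwa [hx]

lemma biUnion_blob_univ : univ.biUnion (blob m) = univ := by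
  simp [biUnion_blob]

lemma card_biUnion_blob (T : Finset (Fin m)) : (T.biUnion (blob m)).card = T.card * m := by
  rw [card_biUnion fun b _ b' _ h => disjoint_blob h, sum_const_nat fun b _ => card_blob b]

lemma biUnion_blob_injective : Function.Injective fun T : Finset (Fin m) => T.biUnion (blob m) := by
  intro T T' h
  ext b
  simpa [biUnion_blob] using congr(((blobDigits m).symm (b, b)) ∈ $h)

end Blobs

section BlobOrder

variable {m : ℕ} [NeZero m]

def blobOrder (b k : Fin m) : Equiv.Perm (Fin m) :=
  (Equiv.addRight (k - b)).trans (Equiv.swap 0 k)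

lemma blobOrder_self (b k : Fin m) : blobOrder b k b = 0 := by
  simp [blobOrder]

lemma blobOrder_ne_zero {b c : Fin m} (hc : c ≠ b) (k : Fin m) : blobOrder b k c ≠ 0 := by
  rw [← blobOrder_self b k]
  exact (blobOrder b k).injective.ne hc

lemma blobOrder_of_ne {b c k : Fin m} (hc : c ≠ b) (hk : k ≠ b - c) :
    blobOrder b k c = c + (k - b) := by
  rw [blobOrder, Equiv.trans_apply, Equiv.coe_addRight]
  refine Equiv.swap_apply_of_ne_of_ne ?_ ?_ <;> intro h
  · exact hk (by grind)
  · exact hc (by grind)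

lemma card_filter_blobOrder_mem_le {b c : Fin m} (hc : c ≠ b) (A : Finset (Fin m)) :
    (univ.filter fun k => blobOrder b k c ∈ A).card ≤ A.card + 1 := by
  set K := univ.filter fun k => blobOrder b k c ∈ A
  have hinj : (K.erase (b - c)).card ≤ A.card := by
    refine card_le_card_of_injOn (fun k => blobOrder b k c) (fun k hk => ?_) ?_
    · exact (mem_filter.mp (mem_of_mem_erase hk)).2
    · intro k hk k' hk' h
      rw [coe_erase, Set.mem_sdiff, Set.mem_singleton_iff] at hk hk'
      simpa [blobOrder_of_ne hc hk.2, blobOrder_of_ne hc hk'.2] using h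
  have := pred_card_le_card_erase (s := K) (a := b - c)
  omega

end BlobOrder

lemma card_filter_pos_mul_lt_le (m t : ℕ) :
    (univ.filter fun e : Fin m => 0 < (e : ℕ) ∧ m * e < t).card ≤ (t - 1) / m := by
  calc _ ≤ (Icc 1 ((t - 1) / m)).card := by
        refine card_le_card_of_injOn (fun e => (e : ℕ)) (fun e he => ?_) Fin.val_injective.injOn
        obtain ⟨he0, het⟩ := (mem_filter.mp he).2
        rw [coe_Icc, Set.mem_Icc, Nat.le_div_iff_mul_le (by lia)]
        lia
    _ = (t - 1) / m := by simp

section Ranking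

def blobRanking (m : ℕ) [NeZero m] (s : Fin (m ^ 2)) : Equiv.Perm (Fin (m ^ 2)) :=
  ((blobDigits m).trans <|
    (Equiv.prodCongr (blobOrder (blobDigits m s).1 (blobDigits m s).2) (Equiv.refl _)).trans
      (blobDigits m).symm).symm

variable {m : ℕ} [NeZero m]

lemma mem_topSet_blobRanking {s x : Fin (m ^ 2)} {t : ℕ} :
    x ∈ topSet (m ^ 2) (blobRanking m) s t ↔
      ((blobDigits m x).2 : ℕ) + m * blobOrder (blobDigits m s).1 (blobDigits m s).2
        (blobDigits m x).1 < t := by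
  simp [topSet, blobRanking, val_blobDigits_symm]

lemma mem_topSet_blobRanking_of_mem_blob {b : Fin m} {s x : Fin (m ^ 2)} {t : ℕ}
    (hs : s ∈ blob m b) (hx : x ∈ blob m b) (ht : m ≤ t) :
    x ∈ topSet (m ^ 2) (blobRanking m) s t := by
  simp only [blob, mem_filter, mem_univ, true_and] at hs hx
  rw [mem_topSet_blobRanking, hs, hx, blobOrder_self]
  simpa using (blobDigits m x).2.isLt.trans_le ht

lemma card_filter_mem_topSet_blobRanking_le {b : Fin m} {j : Fin (m ^ 2)} (hj : j ∉ blob m b)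
    (t : ℕ) :
    ((blob m b).filter fun s => j ∈ topSet (m ^ 2) (blobRanking m) s t).card ≤
      (t - 1) / m + 1 := by
  have hc : (blobDigits m j).1 ≠ b := by simpa [blob] using hj
  calc _ ≤ (univ.filter fun k => blobOrder b k (blobDigits m j).1 ∈
          univ.filter fun e : Fin m => 0 < (e : ℕ) ∧ m * e < t).card := by
        refine card_le_card_of_injOn (fun s => (blobDigits m s).2) (fun s hs => ?_) ?_
        · obtain ⟨rfl, hst⟩ : (blobDigits m s).1 = b ∧ _ := by
            simpa [blob, mem_topSet_blobRanking] using hs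
          have := Fin.pos_iff_ne_zero.mpr (blobOrder_ne_zero hc (blobDigits m s).2)
          simp only [coe_filter, mem_filter, mem_univ, true_and]
          exact ⟨this, by lia⟩
        · intro s hs s' hs' h
          simp only [blob, coe_filter, mem_filter, mem_univ, true_and] at hs hs'
          exact (blobDigits m).injective (Prod.ext (hs.1.trans hs'.1.symm) h)
    _ ≤ _ := (card_filter_blobOrder_mem_le hc _).trans
        (Nat.add_le_add_right (card_filter_pos_mul_lt_le m t) 1)

end Ranking

section Votes

variable {m : ℕ} [NeZero m]

lemma le_votes_blobRanking {T : Finset (Fin m)} {i : Fin (m ^ 2)} (hi : i ∈ T.biUnion (blob m))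
    {t : ℕ} (ht : m ≤ t) : m ≤ votes (m ^ 2) (blobRanking m) (T.biUnion (blob m)) t i := by
  obtain ⟨b, hb, hib⟩ := mem_biUnion.mp hi
  refine (card_blob b).symm.le.trans (card_le_card fun s hs => mem_filter.mpr ?_)
  exact ⟨mem_biUnion.mpr ⟨b, hb, hs⟩, mem_topSet_blobRanking_of_mem_blob hs hib ht⟩

lemma votes_blobRanking_le {T : Finset (Fin m)} {j : Fin (m ^ 2)} (hj : j ∉ T.biUnion (blob m))
    (t : ℕ) :
    votes (m ^ 2) (blobRanking m) (T.biUnion (blob m)) t j ≤ T.card * ((t - 1) / m + 1) := by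
  rw [votes, filter_biUnion]
  refine card_biUnion_le_card_mul _ _ _ fun b hb => card_filter_mem_topSet_blobRanking_le ?_ t
  exact fun hjb => hj (mem_biUnion.mpr ⟨b, hb, hjb⟩)

theorem isCommunity_biUnion_blob {θ : ℝ} {l : ℕ} (hθ : 1 ≤ θ) (hl : 1 ≤ l)
    (hlm : 4 * θ * l ^ 2 ≤ m) {T : Finset (Fin m)} (hT : T.card = l) :
    IsCommunity (m ^ 2) (blobRanking m) θ (1 / l) (1 / (2 * l)) (T.biUnion (blob m)) := by
  have hcard : ((T.biUnion (blob m)).card : ℝ) = l * m := by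
    rw [card_biUnion_blob, hT, Nat.cast_mul]
  set t := ⌈θ * ((T.biUnion (blob m)).card : ℝ)⌉₊
  have hm : (0 : ℝ) < m := Nat.cast_pos.mpr (NeZero.pos m)
  have hlR : (1 : ℝ) ≤ l := by exact_mod_cast hl
  have hmt : m ≤ t := by
    have : θ * (l * m) ≤ t := hcard ▸ Nat.le_ceil _
    exact_mod_cast (show (m : ℝ) ≤ t by nlinarith)
  refine ⟨fun i hi => ?_, fun j hj => ?_⟩
  · have hv : (m : ℝ) ≤ votes (m ^ 2) (blobRanking m) (T.biUnion (blob m)) t i := by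
      exact_mod_cast le_votes_blobRanking hi hmt
    have hα : 1 / (l : ℝ) * (T.biUnion (blob m)).card = m := by
      rw [hcard]
      field_simp
    rwa [hα]
  · have hv : (votes (m ^ 2) (blobRanking m) (T.biUnion (blob m)) t j : ℝ) ≤
        l * ((t - 1) / m + 1 : ℕ) := by
      exact_mod_cast hT ▸ votes_blobRanking_le hj t
    have hq : (((t - 1) / m : ℕ) : ℝ) < θ * l := by
      have ht : (t : ℝ) < θ * (l * m) + 1 := hcard ▸ Nat.ceil_lt_add_one (by positivity)
      have hqt : (t - 1) / m * m + 1 ≤ t := by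
        have := Nat.div_mul_le_self (t - 1) m
        have := NeZero.pos m
        lia
      have : (((t - 1) / m : ℕ) : ℝ) * m + 1 ≤ t := by exact_mod_cast hqt
      nlinarith
    have hβ : 1 / (2 * (l : ℝ)) * (T.biUnion (blob m)).card = m / 2 := by
      rw [hcard]
      field_simp
    rw [hβ]
    push_cast at hv
    nlinarith

end Votes

lemma choose_le_card_filter_of_biUnion_blob {m l : ℕ} (P : Finset (Fin (m ^ 2)) → Prop)
    [DecidablePred P] (hP : ∀ T : Finset (Fin m), T.card = l → P (T.biUnion (blob m))) :
    m.choose l ≤ (univ.filter P).card := by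
  calc m.choose l = (powersetCard l (univ : Finset (Fin m))).card := by simp
    _ ≤ _ := by
      refine card_le_card_of_injOn _ (fun T hT => ?_) biUnion_blob_injective.injOn
      simpa using hP T (mem_powersetCard.mp hT).2

lemma pow_le_choose_of_mul_le {m l : ℕ} {x : ℝ} (hx : 0 ≤ x) (h : x * l ≤ m + 1 - l) :
    x ^ l ≤ m.choose l := by
  obtain rfl | hl := l.eq_zero_or_pos
  · simp
  have hlm : l ≤ m + 1 := by exact_mod_cast (show (l : ℝ) ≤ m + 1 by nlinarith)
  have key : (m + 1 - l) ^ l ≤ l ^ l * m.choose l := by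
    refine (Nat.pow_sub_le_descFactorial m l).trans ?_
    rw [Nat.descFactorial_eq_factorial_mul_choose]
    exact Nat.mul_le_mul_right _ (Nat.factorial_le_pow l)
  have : (l : ℝ) ^ l * x ^ l ≤ l ^ l * m.choose l := by
    calc (l : ℝ) ^ l * x ^ l = (x * l) ^ l := by ring
      _ ≤ ((m + 1 - l : ℕ) : ℝ) ^ l := by
        gcongr
        rw [Nat.cast_sub hlm]
        push_cast
        exact h
      _ ≤ l ^ l * m.choose l := by exact_mod_cast key
  exact le_of_mul_le_mul_left this (by positivity)

lemma natCast_sq_rpow_div_four (m l : ℕ) : ((m ^ 2 : ℕ) : ℝ) ^ ((l : ℝ) / 4) = √m ^ l := by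
  rw [Real.sqrt_eq_rpow, ← Real.rpow_natCast _ l, ← Real.rpow_mul (Nat.cast_nonneg m), Nat.cast_pow,
    ← Real.rpow_natCast _ 2, ← Real.rpow_mul (Nat.cast_nonneg m)]
  ring_nf

lemma natCast_sq_rpow_div_four_le_choose {m l : ℕ} (h : 4 * (l : ℝ) ^ 2 ≤ m) :
    ((m ^ 2 : ℕ) : ℝ) ^ ((l : ℝ) / 4) ≤ m.choose l := by
  rw [natCast_sq_rpow_div_four]
  refine pow_le_choose_of_mul_le (Real.sqrt_nonneg m) ?_
  have hs : √m ^ 2 = m := Real.sq_sqrt (Nat.cast_nonneg m)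
  have h2l : 2 * (l : ℝ) ≤ √m := Real.le_sqrt_of_sq_le (by linarith)
  nlinarith [sq_nonneg (√m - 1)]

open scoped Classical in
theorem stmt_8 (θ : ℝ) (hθ : 1 ≤ θ) :
    ∃ n₀ : ℕ, ∀ m l : ℕ, n₀ ≤ m ^ 2 → 2 ≤ l →
      (l : ℝ) ≤ Real.sqrt m / (2 * Real.sqrt θ) →
      ∃ (π : Fin (m ^ 2) → Equiv.Perm (Fin (m ^ 2)))
        (B : Fin m → Finset (Fin (m ^ 2))),
        (∀ b, (B b).card = m) ∧
        (∀ b b', b ≠ b' → Disjoint (B b) (B b')) ∧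
        (Finset.univ.biUnion B = Finset.univ) ∧
        (∀ T : Finset (Fin m), T.card = l →
          IsCommunity (m ^ 2) π θ (1 / (l : ℝ)) (1 / (2 * (l : ℝ))) (T.biUnion B)) ∧
        ((m.choose l : ℝ) ≤
          (((Finset.univ : Finset (Finset (Fin (m ^ 2)))).filter
              (fun S => IsCommunity (m ^ 2) π θ (1 / (l : ℝ)) (1 / (2 * (l : ℝ))) S)).card : ℝ)) ∧
        (((m ^ 2 : ℕ) : ℝ) ^ ((l : ℝ) / 4) ≤ (m.choose l : ℝ)) := by
  refine ⟨0, fun m l _ hl hlm => ?_⟩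
  have hθl : 4 * θ * l ^ 2 ≤ m := by
    rw [le_div_iff₀ (by positivity)] at hlm
    have := pow_le_pow_left₀ (by positivity) hlm 2
    rw [mul_pow, mul_pow, Real.sq_sqrt (by positivity), Real.sq_sqrt (Nat.cast_nonneg m)] at this
    linarith
  have hl2 : (2 : ℝ) ≤ l := by exact_mod_cast hl
  have : NeZero m := ⟨by rintro rfl; push_cast at hθl; nlinarith⟩
  have hcomm : ∀ T : Finset (Fin m), T.card = l →
      IsCommunity (m ^ 2) (blobRanking m) θ (1 / l) (1 / (2 * l)) (T.biUnion (blob m)) :=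
    fun T hT => isCommunity_biUnion_blob hθ (by lia) hθl hT
  refine ⟨blobRanking m, blob m, card_blob, fun _ _ => disjoint_blob, biUnion_blob_univ, hcomm,
    ?_, natCast_sq_rpow_div_four_le_choose (by nlinarith)⟩
  exact_mod_cast choose_le_card_filter_of_biUnion_blob _ hcomm
end

section
/- Let S be a (θ,α,β)-self-determined community of size t with α > 1/2. For v ∈ S let O_S(v) = π_v(1:⌈θt⌉) ∩ S and I_S(v) = {u ∈ S : v ∈ π_u(1:⌈θt⌉)}. Let T = {v ∈ S : |O_S(v)| ≥ t/2}. Then |T| ≥ (2α − 1)t, and for every v ∈ T and every u ∈ S one has |O_S(v) ∩ I_S(u)| ≥ (α − 1/2)·t. -/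
/-!
Counting the votes cast inside `S` in two ways, the average of `|O_S(v)|` over `v ∈ S` equals the
average of `|I_S(u)|`, which is at least `α t`. Since `|O_S(v)| ≤ t` always and `|O_S(v)| < t / 2`
outside `T`, this average is at most `(t + |T|) / 2`, whence `|T| ≥ (2α - 1) t`. For the second
claim, `O_S(v)` and `I_S(u)` are subsets of `S` of sizes at least `t / 2` and `α t`, so they
overlap in at least `(α - 1/2) t` elements.
-/
open Finset

/-- `O_S(v)`: the elements of `S` that `v` votes for (w.r.t. community size `t`). -/
def outSet (n : ℕ) (π : Fin n → Equiv.Perm (Fin n)) (S : Finset (Fin n)) (T : ℕ)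
    (v : Fin n) : Finset (Fin n) :=
  topSet n π v T ∩ S

/-- `I_S(v)`: the elements of `S` that vote for `v` (w.r.t. community size `t`). -/
def inSet (n : ℕ) (π : Fin n → Equiv.Perm (Fin n)) (S : Finset (Fin n)) (T : ℕ)
    (v : Fin n) : Finset (Fin n) :=
  S.filter (fun u => v ∈ topSet n π u T)

section Counting

variable {ι : Type*}

lemma Finset.card_add_card_le_card_inter_add_of_subset [DecidableEq ι] {A B S : Finset ι}
    (hA : A ⊆ S) (hB : B ⊆ S) : #A + #B ≤ #(A ∩ B) + #S := by
  rw [← card_inter_add_card_union]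
  exact Nat.add_le_add_left (card_le_card (union_subset hA hB)) _

lemma Finset.sum_le_card_add_card_filter_mul_half (s : Finset ι) (f : ι → ℝ) (M : ℝ)
    [DecidablePred fun i => M / 2 ≤ f i] (hf : ∀ i ∈ s, f i ≤ M) :
    ∑ i ∈ s, f i ≤ (#s + #{i ∈ s | M / 2 ≤ f i}) * M / 2 := by
  have hbig : ∑ i ∈ s with M / 2 ≤ f i, f i ≤ #{i ∈ s | M / 2 ≤ f i} * M := by
    simpa using sum_le_card_nsmul _ f M fun i hi => hf i (mem_filter.1 hi).1
  have hsmall :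
      ∑ i ∈ s with ¬M / 2 ≤ f i, f i ≤ #{i ∈ s | ¬M / 2 ≤ f i} * (M / 2) := by
    simpa using sum_le_card_nsmul _ f (M / 2) fun i hi => (not_le.1 (mem_filter.1 hi).2).le
  have hcard : (#{i ∈ s | M / 2 ≤ f i} : ℝ) + #{i ∈ s | ¬M / 2 ≤ f i} = #s := by
    exact_mod_cast card_filter_add_card_filter_not _
  rw [← sum_filter_add_sum_filter_not s fun i => M / 2 ≤ f i, ← hcard]
  linarith

lemma Finset.le_card_filter_half_le_of_mul_card_le_sum (s : Finset ι) (f : ι → ℝ) (α : ℝ)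
    [DecidablePred fun i => (#s : ℝ) / 2 ≤ f i] (hf : ∀ i ∈ s, f i ≤ #s)
    (hsum : α * #s * #s ≤ ∑ i ∈ s, f i) :
    (2 * α - 1) * #s ≤ #{i ∈ s | (#s : ℝ) / 2 ≤ f i} := by
  have hs := hsum.trans (s.sum_le_card_add_card_filter_mul_half f _ hf)
  rcases (Nat.cast_nonneg (α := ℝ) #s).eq_or_lt with h0 | hpos
  · simp [← h0]
  · nlinarith

end Counting

section Votes

variable {n : ℕ} (π : Fin n → Equiv.Perm (Fin n)) (S : Finset (Fin n)) (N : ℕ)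

lemma outSet_subset (v : Fin n) : outSet n π S N v ⊆ S := inter_subset_right

lemma inSet_subset (v : Fin n) : inSet n π S N v ⊆ S := filter_subset _ _

lemma sum_card_outSet_eq_sum_card_inSet :
    ∑ v ∈ S, #(outSet n π S N v) = ∑ u ∈ S, #(inSet n π S N u) := by
  have := sum_card_bipartiteAbove_eq_sum_card_bipartiteBelow (s := S) (t := S)
    (r := fun v x => x ∈ topSet n π v N)
  simpa only [outSet, inSet, bipartiteAbove, bipartiteBelow, filter_mem_eq_inter, inter_comm S]
    using this

lemma IsCommunity.mul_card_le_card_inSet {θ α β : ℝ} {S : Finset (Fin n)}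
    (hS : IsCommunity n π θ α β S) {u : Fin n} (hu : u ∈ S) :
    α * #S ≤ #(inSet n π S ⌈θ * #S⌉₊ u) :=
  hS.1 u hu

end Votes

open scoped Classical in
theorem stmt_9_general (n : ℕ) (π : Fin n → Equiv.Perm (Fin n)) (θ α β : ℝ)
    (S : Finset (Fin n)) (t : ℕ) (ht : t = S.card)
    (hS : IsCommunity n π θ α β S)
    (Tset : Finset (Fin n))
    (hTset : Tset = S.filter (fun v =>
      (t : ℝ) / 2 ≤ ((outSet n π S ⌈θ * (t : ℝ)⌉₊ v).card : ℝ))) :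
    (2 * α - 1) * t ≤ (Tset.card : ℝ) ∧
    ∀ v ∈ Tset, ∀ u ∈ S,
      (α - 1 / 2) * t ≤
        (((outSet n π S ⌈θ * (t : ℝ)⌉₊ v ∩ inSet n π S ⌈θ * (t : ℝ)⌉₊ u)).card : ℝ) := by
  subst ht hTset
  set N := ⌈θ * (#S : ℝ)⌉₊
  refine ⟨S.le_card_filter_half_le_of_mul_card_le_sum _ α
    (fun v _ => mod_cast card_le_card (outSet_subset π S N v)) ?_, fun v hv u hu => ?_⟩
  · calc α * #S * #S = ∑ _u ∈ S, α * #S := by rw [sum_const, nsmul_eq_mul]; ring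
      _ ≤ ∑ u ∈ S, (#(inSet n π S N u) : ℝ) :=
        sum_le_sum fun u hu => hS.mul_card_le_card_inSet π hu
      _ = ∑ v ∈ S, (#(outSet n π S N v) : ℝ) :=
        mod_cast (sum_card_outSet_eq_sum_card_inSet π S N).symm
  · have hinter : (#(outSet n π S N v) : ℝ) + #(inSet n π S N u)
        ≤ #(outSet n π S N v ∩ inSet n π S N u) + #S :=
      mod_cast card_add_card_le_card_inter_add_of_subset (outSet_subset π S N v)
        (inSet_subset π S N u)
    linarith [(mem_filter.1 hv).2, hS.mul_card_le_card_inSet π hu]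

open scoped Classical in
theorem stmt_9 (n : ℕ) (π : Fin n → Equiv.Perm (Fin n)) (θ α β : ℝ)
    (hθ : 1 ≤ θ) (hβ : 0 ≤ β) (hβα : β < α) (hα : α ≤ 1) (hα2 : 1 / 2 < α)
    (S : Finset (Fin n)) (t : ℕ) (ht : t = S.card)
    (hS : IsCommunity n π θ α β S)
    (Tset : Finset (Fin n))
    (hTset : Tset = S.filter (fun v =>
      (t : ℝ) / 2 ≤ ((outSet n π S ⌈θ * (t : ℝ)⌉₊ v).card : ℝ))) :
    (2 * α - 1) * t ≤ (Tset.card : ℝ) ∧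
    ∀ v ∈ Tset, ∀ u ∈ S,
      (α - 1 / 2) * t ≤
        (((outSet n π S ⌈θ * (t : ℝ)⌉₊ v ∩ inSet n π S ⌈θ * (t : ℝ)⌉₊ u)).card : ℝ) :=
  stmt_9_general n π θ α β S t ht hS Tset hTset
end

section
/- Let c ≥ 8 ln 2 and let k = ⌈2c log₂ n⌉. Form a random graph on n vertices by drawing G(n, 1/2) and planting a clique on a fixed set K of k vertices (adding all edges inside K). Then with probability at least 1 − 1/n, the set K is a (1, 3/4)-cluster of the resulting graph, i.e. every vertex of K has all of K among its neighbors (including the self-loop) and every vertex outside K has at most (3/4)k neighbors in K. -/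
open Finset
open scoped Classical

/-- The unordered pairs of distinct vertices. -/
def pairs (n : ℕ) : Finset (Sym2 (Fin n)) :=
  Finset.univ.filter (fun e => ¬ e.IsDiag)

/-- The probability of the edge set `E` under `G(n,p)`: each non-diagonal pair is an
edge independently with probability `p`. -/
noncomputable def gweight (n : ℕ) (p : ℝ) (E : Finset (Sym2 (Fin n))) : ℝ :=
  p ^ E.card * (1 - p) ^ ((pairs n).card - E.card)

/-- Adjacency in the graph with edge set `E`, where every vertex has a self-loop. -/
def Adj (n : ℕ) (E : Finset (Sym2 (Fin n))) (i j : Fin n) : Prop :=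
  i = j ∨ s(i, j) ∈ E

/-- `S` is an `(α,β)`-cluster with respect to the adjacency relation `A`
(every vertex having a self-loop). -/
def IsClusterRel (n : ℕ) (A : Fin n → Fin n → Prop) (α β : ℝ)
    (S : Finset (Fin n)) : Prop :=
  (∀ i ∈ S, α * S.card ≤ ((S.filter (fun j => A i j)).card : ℝ)) ∧
  (∀ j, j ∉ S → ((S.filter (fun i => A j i)).card : ℝ) ≤ β * S.card)

/-- `S` is a clique (with respect to adjacency including self-loops). -/
def IsClique' (n : ℕ) (E : Finset (Sym2 (Fin n))) (S : Finset (Fin n)) : Prop :=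
  ∀ i ∈ S, ∀ j ∈ S, Adj n E i j

/-- Adjacency after planting a clique on the vertex set `K` (self-loops included). -/
def AdjP (n : ℕ) (K : Finset (Fin n)) (E : Finset (Sym2 (Fin n))) (i j : Fin n) : Prop :=
  i = j ∨ (i ∈ K ∧ j ∈ K) ∨ s(i, j) ∈ E


/-! Under `G(n, 1/2)` all edge sets are equally likely, and planting the clique makes every
vertex of `K` adjacent to all of `K`, so `K` fails to be a `(1, 3/4)`-cluster only if some
`j ∉ K` has more than `3k/4` of its `k` potential edges into `K`. These edges are `k` fair coins,
so the number `X` of them present satisfies `𝔼[3^X] = 2^k`, and Markov's inequality bounds the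
probability of `X > 3k/4` by `2^k / 3^(3k/4 + 1)`. A union bound over the at most `n` outside
vertices leaves `n² 2^k ≤ 3^(3k/4 + 1)` to check, which holds once `k ≥ 16 ln n`; this is what
`c ≥ 8 ln 2` guarantees. -/

theorem sum_three_pow_card_inter {α : Type*} [DecidableEq α] {P T : Finset α} (hT : T ⊆ P) :
    ∑ E ∈ P.powerset, 3 ^ #(E ∩ T) = 2 ^ #T * 2 ^ #P := by
  -- Expand `∏ e ∈ P, (w e + 1)` where `w = 3` on `T` and `w = 1` off `T`.
  have h := prod_add (fun e => if e ∈ T then 3 else 1) (fun _ => 1) P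
  simp only [prod_ite_mem, prod_const, one_pow, mul_one] at h
  rw [← h]
  calc ∏ e ∈ P, ((if e ∈ T then 3 else 1) + 1) = ∏ e ∈ P, (if e ∈ T then 2 else 1) * 2 :=
        prod_congr rfl fun e _ => by split_ifs <;> rfl
    _ = 2 ^ #T * 2 ^ #P := by
        rw [prod_mul_distrib, prod_ite_mem, inter_eq_right.mpr hT, prod_const, prod_const]

theorem pow_mul_card_filter_le_card_inter {α : Type*} [DecidableEq α] {P T : Finset α}
    (hT : T ⊆ P) (m : ℕ) :
    3 ^ m * #{E ∈ P.powerset | m ≤ #(E ∩ T)} ≤ 2 ^ #T * 2 ^ #P := by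
  rw [← sum_three_pow_card_inter hT, mul_comm, ← smul_eq_mul]
  calc #{E ∈ P.powerset | m ≤ #(E ∩ T)} • 3 ^ m
      ≤ ∑ E ∈ P.powerset with m ≤ #(E ∩ T), 3 ^ #(E ∩ T) :=
        card_nsmul_le_sum _ _ _ fun E hE => Nat.pow_le_pow_right (by norm_num) (mem_filter.mp hE).2
    _ ≤ ∑ E ∈ P.powerset, 3 ^ #(E ∩ T) := sum_le_sum_of_subset (filter_subset _ _)

theorem sq_mul_two_pow_le_three_pow {n k : ℕ} (h : 16 * Real.log n ≤ k) :
    n ^ 2 * 2 ^ k ≤ 3 ^ (3 * k / 4 + 1) := by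
  -- After raising to the fourth power: `n⁸ 16^k ≤ (√e · 16)^k ≤ 27^k = 3^(3k)`.
  have hreal : ((n : ℝ) ^ 2 * 2 ^ k) ^ 4 ≤ 27 ^ k := by
    rcases Nat.eq_zero_or_pos n with rfl | hn
    · simp
    have hn8 : (n : ℝ) ^ 8 ≤ Real.exp (1 / 2) ^ k := by
      rw [← Real.exp_log (Nat.cast_pos.mpr hn), ← Real.exp_nat_mul, ← Real.exp_nat_mul]
      exact Real.exp_le_exp.mpr (by push_cast; linarith)
    have hexp : Real.exp (1 / 2) ≤ 27 / 16 := by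
      refine (pow_le_pow_iff_left₀ (Real.exp_pos _).le (by norm_num) two_ne_zero).mp ?_
      rw [← Real.exp_nat_mul]
      norm_num
      linarith [Real.exp_one_lt_d9]
    calc ((n : ℝ) ^ 2 * 2 ^ k) ^ 4 = (n : ℝ) ^ 8 * 16 ^ k := by
          rw [mul_pow, ← pow_mul, ← pow_mul, mul_comm k, pow_mul]; norm_num [pow_mul]
      _ ≤ Real.exp (1 / 2) ^ k * 16 ^ k := by gcongr
      _ = (Real.exp (1 / 2) * 16) ^ k := (mul_pow _ _ _).symm
      _ ≤ 27 ^ k := by gcongr; linarith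
  have h27 : 27 ^ k ≤ (3 ^ (3 * k / 4 + 1)) ^ 4 := by
    rw [← pow_mul, (by norm_num [pow_mul] : 27 ^ k = 3 ^ (3 * k))]
    exact Nat.pow_le_pow_right (by norm_num) (by omega)
  exact (pow_le_pow_iff_left₀ (by positivity) (by positivity) four_ne_zero).mp
    (le_trans (by exact_mod_cast hreal) h27)

theorem sixteen_log_le_ceil {c : ℝ} (hc : 8 * Real.log 2 ≤ c) (n : ℕ) :
    16 * Real.log n ≤ ⌈2 * c * Real.logb 2 n⌉₊ := by
  have hlogb : 0 ≤ Real.logb 2 n :=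
    div_nonneg (Real.log_natCast_nonneg n) (Real.log_pos one_lt_two).le
  calc 16 * Real.log n = 16 * Real.log 2 * Real.logb 2 n := by
        rw [Real.logb, mul_assoc, mul_div_cancel₀ _ (Real.log_pos one_lt_two).ne']
    _ ≤ 2 * c * Real.logb 2 n := mul_le_mul_of_nonneg_right (by linarith) hlogb
    _ ≤ ⌈2 * c * Real.logb 2 n⌉₊ := Nat.le_ceil _

theorem gweight_half {n : ℕ} {E : Finset (Sym2 (Fin n))} (hE : E ⊆ pairs n) :
    gweight n (1 / 2) E = (1 / 2) ^ #(pairs n) := by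
  rw [gweight, (by norm_num : (1 : ℝ) - 1 / 2 = 1 / 2), ← pow_add,
    Nat.add_sub_cancel' (card_le_card hE)]

theorem sum_gweight_half_mul_ite {n : ℕ} (p : Finset (Sym2 (Fin n)) → Prop) [DecidablePred p] :
    ∑ E ∈ (pairs n).powerset, gweight n (1 / 2) E * (if p E then 1 else 0) =
      #{E ∈ (pairs n).powerset | p E} / 2 ^ #(pairs n) := by
  rw [card_filter, Nat.cast_sum, sum_div]
  refine sum_congr rfl fun E hE => ?_
  rw [gweight_half (mem_powerset.mp hE)]
  split_ifs <;> simp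

theorem one_sub_one_div_le_div_of_add_eq {g b N n : ℕ} (hn : 0 < n) (hN : 0 < N) (h : g + b = N)
    (hb : b * n ≤ N) : 1 - 1 / (n : ℝ) ≤ g / N := by
  have hb' : (b : ℝ) ≤ N / n := by
    rw [le_div_iff₀ (by positivity)]
    exact_mod_cast hb
  have h' : (g : ℝ) + b = N := by exact_mod_cast h
  rw [le_div_iff₀ (by positivity)]
  calc (1 - 1 / (n : ℝ)) * N = N - N / n := by ring
    _ ≤ g := by linarith

theorem isClusterRel_adjP_iff {n : ℕ} (K : Finset (Fin n)) (E : Finset (Sym2 (Fin n))) (β : ℝ) :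
    IsClusterRel n (AdjP n K E) 1 β K ↔ ∀ j ∉ K, (#{i ∈ K | AdjP n K E j i} : ℝ) ≤ β * #K :=
  and_iff_right fun i hi => by
    rw [filter_true_of_mem (p := AdjP n K E i) fun j hj => Or.inr (Or.inl ⟨hi, hj⟩), one_mul]

theorem card_image_sym2_mk {n : ℕ} (j : Fin n) (K : Finset (Fin n)) :
    #(K.image (s(j, ·))) = #K :=
  card_image_of_injective _ fun _ _ => Sym2.congr_right.mp

theorem image_sym2_mk_subset_pairs {n : ℕ} {j : Fin n} {K : Finset (Fin n)} (hj : j ∉ K) :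
    K.image (s(j, ·)) ⊆ pairs n :=
  image_subset_iff.mpr fun _ hi => mem_filter.mpr
    ⟨mem_univ _, Sym2.mk_isDiag_iff.not.mpr fun hji => hj (hji ▸ hi)⟩

theorem card_filter_adjP_of_notMem {n : ℕ} {j : Fin n} {K : Finset (Fin n)} (hj : j ∉ K)
    (E : Finset (Sym2 (Fin n))) :
    #{i ∈ K | AdjP n K E j i} = #(E ∩ K.image (s(j, ·))) := by
  rw [inter_comm, ← filter_mem_eq_inter, filter_image,
    card_image_of_injective _ fun _ _ => Sym2.congr_right.mp]
  refine congrArg card (filter_congr fun i hi => ?_)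
  simp only [AdjP, hj, false_and, false_or]
  exact or_iff_right fun hji => hj (hji ▸ hi)

theorem card_not_isClusterRel_mul_le {n : ℕ} (K : Finset (Fin n)) (hK : 16 * Real.log n ≤ #K) :
    #{E ∈ (pairs n).powerset | ¬ IsClusterRel n (AdjP n K E) 1 (3 / 4) K} * n ≤
      2 ^ #(pairs n) := by
  set m := 3 * #K / 4 + 1
  set bad := {E ∈ (pairs n).powerset | ¬ IsClusterRel n (AdjP n K E) 1 (3 / 4) K}
  set heavy : Fin n → Finset (Finset (Sym2 (Fin n))) := fun j =>
    {E ∈ (pairs n).powerset | m ≤ #(E ∩ K.image (s(j, ·)))}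
  have hbad : bad ⊆ Kᶜ.biUnion heavy := by
    intro E hE
    obtain ⟨hEP, hE⟩ := mem_filter.mp hE
    rw [isClusterRel_adjP_iff] at hE
    push Not at hE
    obtain ⟨j, hj, hlt⟩ := hE
    rw [card_filter_adjP_of_notMem hj] at hlt
    have : (3 * #K : ℝ) < 4 * #(E ∩ K.image (s(j, ·))) := by linarith
    have : 3 * #K < 4 * #(E ∩ K.image (s(j, ·))) := by exact_mod_cast this
    exact mem_biUnion.mpr ⟨j, mem_compl.mpr hj, mem_filter.mpr ⟨hEP, by omega⟩⟩
  have hheavy : ∀ j ∈ Kᶜ, 3 ^ m * #(heavy j) ≤ 2 ^ #K * 2 ^ #(pairs n) := fun j hj => by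
    simpa only [card_image_sym2_mk] using
      pow_mul_card_filter_le_card_inter (image_sym2_mk_subset_pairs (mem_compl.mp hj)) m
  have hunion : 3 ^ m * #bad ≤ n * (2 ^ #K * 2 ^ #(pairs n)) :=
    calc 3 ^ m * #bad ≤ ∑ j ∈ Kᶜ, 3 ^ m * #(heavy j) := by
          rw [← mul_sum]
          exact Nat.mul_le_mul_left _ ((card_le_card hbad).trans card_biUnion_le)
      _ ≤ #Kᶜ * (2 ^ #K * 2 ^ #(pairs n)) := sum_le_card_nsmul _ _ _ hheavy
      _ ≤ n * (2 ^ #K * 2 ^ #(pairs n)) := by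
          gcongr
          exact (card_le_univ _).trans_eq (Fintype.card_fin n)
  refine Nat.le_of_mul_le_mul_left ?_ (pow_pos three_pos m)
  calc 3 ^ m * (#bad * n) = 3 ^ m * #bad * n := by ring
    _ ≤ n * (2 ^ #K * 2 ^ #(pairs n)) * n := Nat.mul_le_mul_right _ hunion
    _ = n ^ 2 * 2 ^ #K * 2 ^ #(pairs n) := by ring
    _ ≤ 3 ^ m * 2 ^ #(pairs n) := Nat.mul_le_mul_right _ (sq_mul_two_pow_le_three_pow hK)

theorem stmt_15 (c : ℝ) (hc : 8 * Real.log 2 ≤ c) (n : ℕ) (k : ℕ)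
    (hk : k = ⌈2 * c * Real.logb 2 n⌉₊)
    (K : Finset (Fin n)) (hK : K.card = k) :
    1 - 1 / (n : ℝ) ≤
      ∑ E ∈ (pairs n).powerset, gweight n (1 / 2) E *
        (if IsClusterRel n (AdjP n K E) 1 (3 / 4) K then 1 else 0) := by
  rw [sum_gweight_half_mul_ite]
  rcases Nat.eq_zero_or_pos n with rfl | hn
  · rw [filter_true_of_mem fun E _ => ⟨fun i => i.elim0, fun j => j.elim0⟩, card_powerset]
    simp
  have hlog : 16 * Real.log n ≤ #K := hK ▸ hk ▸ sixteen_log_le_ceil hc n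
  exact_mod_cast one_sub_one_div_le_div_of_add_eq hn (by positivity)
    ((card_filter_add_card_filter_not _).trans (card_powerset _))
    (card_not_isClusterRel_mul_le K hlog)
end

section
/- Let γ = 0.1 and ε = 0.01, and let k = ⌈(1/ε²) ln n⌉. Form a random graph on n vertices by drawing G(n, 1 − γ − ε) and planting a clique on a fixed set K of k vertices (adding all edges inside K). Then for all sufficiently large n, with probability at least 1 − 1/n, the set K is a (1, 1 − γ)-cluster of the resulting graph, i.e. every vertex outside K has at most (1 − γ)k neighbors in K. -/
open Finset
open scoped Classical

/-!
For `j ∉ K`, the number of neighbours of `j` in `K` is a sum of `k = |K|` independent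
Bernoulli(`0.89`) variables. Markov's inequality for `1.1 ^ (number of neighbours)` bounds the
probability that it exceeds `0.9 k` by `1.089 ^ k / 1.1 ^ (0.9 k) = exp (-c k)`, `c ≈ 5 · 10⁻⁴`,
which is at most `1 / n ^ 2` once `k ≥ 10⁴ log n`. A union bound over the at most `n` vertices
outside `K` gives failure probability at most `1 / n`; inside `K` the planted clique makes every
vertex adjacent to all of `K`.
-/

section SubsetWeight

variable {α R : Type*}

/-- The probability that the random subset of `s`, containing each element independently with
probability `p`, is `t`. -/
def subsetWeight [CommRing R] (p : R) (s t : Finset α) : R :=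
  p ^ #t * (1 - p) ^ (#s - #t)

theorem sum_subsetWeight [CommRing R] (p : R) (s : Finset α) :
    ∑ t ∈ s.powerset, subsetWeight p s t = 1 := by
  rw [← one_pow #s, ← add_sub_cancel p 1]
  exact sum_pow_mul_eq_add_pow p (1 - p) s

theorem subsetWeight_nonneg [CommRing R] [PartialOrder R] [IsOrderedRing R] {p : R}
    (hp₀ : 0 ≤ p) (hp₁ : p ≤ 1) (s t : Finset α) : 0 ≤ subsetWeight p s t :=
  mul_nonneg (pow_nonneg hp₀ _) (pow_nonneg (sub_nonneg.2 hp₁) _)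

theorem subsetWeight_insert_of_subset [DecidableEq α] [CommRing R] (p : R) {a : α}
    {s t : Finset α} (ha : a ∉ s) (ht : t ⊆ s) :
    subsetWeight p (insert a s) t = (1 - p) * subsetWeight p s t := by
  rw [subsetWeight, subsetWeight, card_insert_of_notMem ha, Nat.sub_add_comm (card_le_card ht),
    pow_succ]
  ring

theorem subsetWeight_insert_insert [DecidableEq α] [CommRing R] (p : R) {a : α}
    {s t : Finset α} (ha : a ∉ s) (ht : t ⊆ s) :
    subsetWeight p (insert a s) (insert a t) = p * subsetWeight p s t := by
  rw [subsetWeight, subsetWeight, card_insert_of_notMem ha,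
    card_insert_of_notMem fun hat => ha (ht hat), Nat.add_sub_add_right, pow_succ]
  ring

/-- The trace on `T` of a random subset of `s` is a random subset of `T`. -/
theorem sum_subsetWeight_mul_inter [DecidableEq α] [CommRing R] (p : R) {s T : Finset α}
    (hTs : T ⊆ s) (f : Finset α → R) :
    ∑ t ∈ s.powerset, subsetWeight p s t * f (t ∩ T) =
      ∑ t ∈ T.powerset, subsetWeight p T t * f t := by
  obtain ⟨U, hTU, rfl⟩ : ∃ U, Disjoint T U ∧ s = T ∪ U :=
    ⟨s \ T, disjoint_sdiff, (union_sdiff_of_subset hTs).symm⟩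
  clear hTs
  induction U using Finset.induction_on with
  | empty =>
    rw [union_empty]
    exact sum_congr rfl fun t ht => by rw [inter_eq_left.2 (mem_powerset.1 ht)]
  | insert a U haU ih =>
    have haT : a ∉ T := disjoint_right.1 hTU (mem_insert_self a U)
    have ha : a ∉ T ∪ U := by simp [haT, haU]
    rw [union_insert, sum_powerset_insert ha, ← ih (hTU.mono_right (subset_insert a U)),
      ← sum_add_distrib]
    refine sum_congr rfl fun t ht => ?_
    rw [mem_powerset] at ht
    rw [subsetWeight_insert_of_subset p ha ht, subsetWeight_insert_insert p ha ht,
      insert_inter_of_notMem haT]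
    ring

/-- Markov's inequality for `r ^ #t`, whose mean is `(r * p + (1 - p)) ^ #T`. -/
theorem sum_subsetWeight_mul_ite_le_card_le [Field R] [LinearOrder R] [IsStrictOrderedRing R]
    {p r : R} (hp₀ : 0 ≤ p) (hp₁ : p ≤ 1) (hr : 1 ≤ r) (T : Finset α) (b : ℕ) :
    ∑ t ∈ T.powerset, subsetWeight p T t * (if b ≤ #t then 1 else 0) ≤
      (r * p + (1 - p)) ^ #T / r ^ b := by
  rw [← sum_pow_mul_eq_add_pow, sum_div]
  refine sum_le_sum fun t _ => ?_
  have hq : 0 ≤ 1 - p := sub_nonneg.2 hp₁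
  split_ifs with hbt
  · rw [mul_one, subsetWeight, le_div_iff₀ (by positivity)]
    calc p ^ #t * (1 - p) ^ (#T - #t) * r ^ b
        ≤ p ^ #t * (1 - p) ^ (#T - #t) * r ^ #t := by gcongr
      _ = (r * p) ^ #t * (1 - p) ^ (#T - #t) := by ring
  · rw [mul_zero]
    positivity

theorem sum_subsetWeight_mul_ite_le_card_inter_le [DecidableEq α] [Field R] [LinearOrder R]
    [IsStrictOrderedRing R] {p r : R} (hp₀ : 0 ≤ p) (hp₁ : p ≤ 1) (hr : 1 ≤ r)
    {s T : Finset α} (hTs : T ⊆ s) (b : ℕ) :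
    ∑ t ∈ s.powerset, subsetWeight p s t * (if b ≤ #(t ∩ T) then 1 else 0) ≤
      (r * p + (1 - p)) ^ #T / r ^ b :=
  (sum_subsetWeight_mul_inter p hTs fun t => if b ≤ #t then 1 else 0).trans_le
    (sum_subsetWeight_mul_ite_le_card_le hp₀ hp₁ hr T b)

theorem one_sub_sum_ite_le_ite [Ring R] [PartialOrder R] [IsOrderedRing R] {ι : Type*}
    {J : Finset ι} {P : Prop} {B : ι → Prop} [Decidable P] [DecidablePred B]
    (hP : (∀ j ∈ J, ¬ B j) → P) :
    1 - ∑ j ∈ J, (if B j then 1 else 0 : R) ≤ if P then 1 else 0 := by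
  have hind_nonneg : ∀ j ∈ J, (0 : R) ≤ if B j then 1 else 0 := fun j _ => by
    split_ifs <;> norm_num
  by_cases hPt : P
  · rw [if_pos hPt, sub_le_self_iff]
    exact sum_nonneg hind_nonneg
  · obtain ⟨j, hj, hBj⟩ : ∃ j ∈ J, B j := by
      by_contra! h
      exact hPt (hP h)
    rw [if_neg hPt, sub_nonpos]
    calc (1 : R) = if B j then 1 else 0 := (if_pos hBj).symm
      _ ≤ ∑ j ∈ J, (if B j then 1 else 0) :=
        single_le_sum (f := fun j => if B j then (1 : R) else 0) hind_nonneg hj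

theorem one_sub_sum_le_sum_subsetWeight_mul [CommRing R] [PartialOrder R] [IsOrderedRing R]
    {ι : Type*} {p : R} (hp₀ : 0 ≤ p) (hp₁ : p ≤ 1) {s : Finset α} {J : Finset ι}
    {P : Finset α → Prop} {B : ι → Finset α → Prop} [DecidablePred P]
    [∀ j, DecidablePred (B j)] (hP : ∀ t ⊆ s, (∀ j ∈ J, ¬ B j t) → P t) :
    1 - ∑ j ∈ J, ∑ t ∈ s.powerset, subsetWeight p s t * (if B j t then 1 else 0) ≤
      ∑ t ∈ s.powerset, subsetWeight p s t * (if P t then 1 else 0) :=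
  calc 1 - ∑ j ∈ J, ∑ t ∈ s.powerset, subsetWeight p s t * (if B j t then 1 else 0)
      = ∑ t ∈ s.powerset, subsetWeight p s t * (1 - ∑ j ∈ J, (if B j t then 1 else 0)) := by
        simp only [mul_sub, mul_one, mul_sum, sum_sub_distrib, sum_subsetWeight]
        rw [sum_comm]
    _ ≤ ∑ t ∈ s.powerset, subsetWeight p s t * (if P t then 1 else 0) :=
        sum_le_sum fun t ht => mul_le_mul_of_nonneg_left
          (one_sub_sum_ite_le_ite (hP t (mem_powerset.1 ht))) (subsetWeight_nonneg hp₀ hp₁ s t)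

end SubsetWeight

section PlantedClique

def pairsTo {V : Type*} [DecidableEq V] (j : V) (K : Finset V) : Finset (Sym2 V) :=
  K.image fun i => s(j, i)

theorem card_pairsTo {V : Type*} [DecidableEq V] (j : V) (K : Finset V) :
    #(pairsTo j K) = #K :=
  card_image_of_injective K fun _ _ => Sym2.congr_right.1

variable {n : ℕ} {K : Finset (Fin n)}

theorem pairsTo_subset_pairs {j : Fin n} (hj : j ∉ K) : pairsTo j K ⊆ pairs n := by
  intro e he
  obtain ⟨i, hi, rfl⟩ := mem_image.1 he
  simp only [pairs, mem_filter, mem_univ, true_and, Sym2.mk_isDiag_iff]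
  rintro rfl
  exact hj hi

theorem card_filter_adjP {j : Fin n} (hj : j ∉ K) (E : Finset (Sym2 (Fin n))) :
    #(K.filter fun i => AdjP n K E j i) = #(E ∩ pairsTo j K) := by
  have hK : (K.filter fun i => AdjP n K E j i) = K.filter fun i => s(j, i) ∈ E := by
    refine filter_congr fun i hi => ?_
    simp only [AdjP]
    constructor
    · rintro (rfl | ⟨hjK, -⟩ | h)
      exacts [absurd hi hj, absurd hjK hj, h]
    · exact fun h => Or.inr (Or.inr h)
  rw [hK, inter_comm, pairsTo, ← filter_mem_eq_inter, filter_image,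
    card_image_of_injective _ fun _ _ => Sym2.congr_right.1]

theorem isClusterRel_adjP_of_card_inter_le {E : Finset (Sym2 (Fin n))} {β : ℝ}
    (h : ∀ j ∉ K, (#(E ∩ pairsTo j K) : ℝ) ≤ β * #K) :
    IsClusterRel n (AdjP n K E) 1 β K := by
  refine ⟨fun i hi => ?_, fun j hj => ?_⟩
  · rw [filter_true_of_mem (p := fun j => AdjP n K E i j) fun j hj => Or.inr (Or.inl ⟨hi, hj⟩),
      one_mul]
  · rw [card_filter_adjP hj]
    exact h j hj

end PlantedClique

theorem pow_div_pow_le_one_div_sq {n k b : ℕ} (hn : 1 ≤ n) (hk : 10000 * Real.log n ≤ k)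
    (hb : 0.9 * (k : ℝ) < b) :
    (1.089 : ℝ) ^ k / 1.1 ^ b ≤ 1 / (n : ℝ) ^ 2 := by
  have hn₁ : (1 : ℝ) ≤ n := by exact_mod_cast hn
  have hlog : (0.004 : ℝ) ≤ Real.log 1.005 := by
    have := Real.one_sub_inv_le_log_of_pos (by norm_num : (0 : ℝ) < 1.005)
    norm_num at this ⊢
    linarith
  have hn20 : (n : ℝ) ^ 20 ≤ 1.005 ^ k := by
    rw [← Real.log_le_log_iff (by positivity) (by positivity), Real.log_pow, Real.log_pow]
    have := Real.log_nonneg hn₁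
    push_cast
    nlinarith
  have hbk : 9 * k ≤ 10 * b := by
    have : (9 * k : ℝ) < 10 * b := by linarith
    exact_mod_cast this.le
  rw [div_le_div_iff₀ (by positivity) (by positivity), one_mul]
  refine le_of_pow_le_pow_left₀ (n := 10) (by norm_num) (by positivity) ?_
  calc ((1.089 : ℝ) ^ k * n ^ 2) ^ 10 = (1.089 ^ 10) ^ k * n ^ 20 := by
        rw [mul_pow, ← pow_mul, ← pow_mul, ← pow_mul, mul_comm k]
    _ ≤ (1.089 ^ 10) ^ k * 1.005 ^ k := by gcongr
    _ = (1.005 * 1.089 ^ 10) ^ k := by rw [mul_pow, mul_comm]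
    _ ≤ (1.1 ^ 9) ^ k := by gcongr; norm_num
    _ = 1.1 ^ (9 * k) := by rw [pow_mul]
    _ ≤ 1.1 ^ (10 * b) := pow_le_pow_right₀ (by norm_num) hbk
    _ = (1.1 ^ b) ^ 10 := by ring

theorem sum_subsetWeight_mul_ite_le_card_inter_pairsTo_le {n : ℕ} (hn : 1 ≤ n)
    {K : Finset (Fin n)} (hK : 10000 * Real.log n ≤ #K) {j : Fin n} (hj : j ∉ K) {b : ℕ}
    (hb : 0.9 * (#K : ℝ) < b) :
    ∑ E ∈ (pairs n).powerset, subsetWeight (1 - 0.1 - 0.01) (pairs n) E *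
      (if b ≤ #(E ∩ pairsTo j K) then 1 else 0) ≤ 1 / (n : ℝ) ^ 2 := by
  refine (sum_subsetWeight_mul_ite_le_card_inter_le (r := (1.1 : ℝ)) (by norm_num)
    (by norm_num) (by norm_num) (pairsTo_subset_pairs hj) b).trans ?_
  rw [card_pairsTo,
    show (1.1 : ℝ) * (1 - 0.1 - 0.01) + (1 - (1 - 0.1 - 0.01)) = 1.089 by norm_num]
  exact pow_div_pow_le_one_div_sq hn hK hb

theorem stmt_17 (γ ε : ℝ) (hγ : γ = 0.1) (hε : ε = 0.01) :
    ∃ n₀ : ℕ, ∀ n : ℕ, n₀ ≤ n →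
      ∀ K : Finset (Fin n), K.card = ⌈(1 / ε ^ 2) * Real.log n⌉₊ →
        1 - 1 / (n : ℝ) ≤
          ∑ E ∈ (pairs n).powerset, gweight n (1 - γ - ε) E *
            (if IsClusterRel n (AdjP n K E) 1 (1 - γ) K then 1 else 0) := by
  subst hγ hε
  refine ⟨1, fun n hn K hK => ?_⟩
  have hlogK : 10000 * Real.log n ≤ #K := hK ▸ le_of_eq_of_le (by norm_num) (Nat.le_ceil _)
  set b := ⌊0.9 * (#K : ℝ)⌋₊ + 1
  have hbK : 0.9 * (#K : ℝ) < b := by exact_mod_cast Nat.lt_floor_add_one _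
  have hgood : ∀ E ⊆ pairs n, (∀ j ∈ Kᶜ, ¬ b ≤ #(E ∩ pairsTo j K)) →
      IsClusterRel n (AdjP n K E) 1 (1 - 0.1) K := fun E _ h =>
    isClusterRel_adjP_of_card_inter_le fun j hj => by
      rw [show (1 : ℝ) - 0.1 = 0.9 by norm_num]
      exact (Nat.le_floor_iff (by positivity)).1
        (Nat.lt_succ_iff.1 (not_le.1 (h j (mem_compl.2 hj))))
  have hn₀ : (0 : ℝ) < n := by exact_mod_cast hn
  calc 1 - 1 / (n : ℝ) = 1 - n * (1 / (n : ℝ) ^ 2) := by field_simp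
    _ ≤ 1 - ∑ j ∈ Kᶜ, 1 / (n : ℝ) ^ 2 := by
        rw [sum_const, nsmul_eq_mul]
        gcongr
        exact_mod_cast (card_le_univ Kᶜ).trans_eq (Fintype.card_fin n)
    _ ≤ 1 - ∑ j ∈ Kᶜ, ∑ E ∈ (pairs n).powerset,
          subsetWeight (1 - 0.1 - 0.01) (pairs n) E *
            (if b ≤ #(E ∩ pairsTo j K) then 1 else 0) := by
        gcongr with j hj
        exact sum_subsetWeight_mul_ite_le_card_inter_pairsTo_le hn hlogK (mem_compl.1 hj) hbK
    _ ≤ _ := one_sub_sum_le_sum_subsetWeight_mul (by norm_num) (by norm_num) hgood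
end

section
/- Let (V, A) be a weighted affinity system, let θ > 0, 0 ≤ β < α ≤ 1, 0 < ε < α, t a community size, and k = ⌈1/ε⌉. Then there exist an unweighted affinity system (V', Π) on k·|V| members, in which each member ranks only a subset of V' (members vote only for members they rank), and a map f : V' → V mapping exactly k members of V' onto each member of V, such that for every (θ,α,β) weighted self-determined community S of size t in (V, A), the set S' = f^{−1}(S), of size kt, is a (θ, α − ε, β) self-determined community in (V', Π) with f(S') = S. -/
/-! Take `k` copies of every member. If `c` is the capped vote vector of `s` for communities of
size `t` (it is unique, so it does not depend on the community), every copy of `s` ranks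
`⌊k c_j⌋` copies of each `j`, chosen cyclically so that each copy of `j` is ranked by exactly
`⌊k c_j⌋` copies of `s`. Votes are thus scaled by `k`: lists have at most `k θ t` entries, so the
cut-off `⌈θ k t⌉` never bites, and rounding down costs each voter of `S` less than one vote, at
most `t ≤ ε k t` in total. -/

open Finset
open scoped Classical

/-- `a'` is the capped vote vector obtained from the affinity vector `a` with voting
budget `W`: if the total weight of `a` is at most `W` nothing is capped; otherwise the
weights strictly above some threshold value `τ` are kept, the weights at the boundary
value `τ` are scaled down by a common factor `c ∈ [0,1]`, the rest are zeroed out, and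
the retained weights sum to exactly `W`. -/
def IsCappedVote (n : ℕ) (a : Fin n → ℝ) (W : ℝ) (a' : Fin n → ℝ) : Prop :=
  ((∑ j, a j) ≤ W ∧ a' = a) ∨
  (W < (∑ j, a j) ∧ ∃ τ c : ℝ, 0 ≤ τ ∧ 0 ≤ c ∧ c ≤ 1 ∧
    (∀ j, a' j = if τ < a j then a j else if a j = τ then c * a j else 0) ∧
    (∑ j, a' j) = W)

/-- `S` is a `(θ,α,β)` weighted self-determined community of the weighted affinity
system `a`. -/
def IsWeightedCommunity (n : ℕ) (a : Fin n → Fin n → ℝ) (θ α β : ℝ)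
    (S : Finset (Fin n)) : Prop :=
  ∃ cap : Fin n → Fin n → ℝ,
    (∀ s, IsCappedVote n (a s) (θ * S.card) (cap s)) ∧
    (∀ i ∈ S, α * S.card ≤ ∑ s ∈ S, cap s i) ∧
    (∀ j, j ∉ S → (∑ s ∈ S, cap s j) ≤ β * S.card)

/-- A self-determined community in an unweighted affinity system in which each member
ranks only a subset of the members (given as a duplicate-free list, most preferred
first); a member votes for the members among the top `⌈θ|S|⌉` entries of her list. -/
def IsListCommunity (N : ℕ) (π : Fin N → List (Fin N)) (θ α β : ℝ)
    (S : Finset (Fin N)) : Prop :=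
  (∀ i ∈ S, α * S.card ≤
    ((S.filter (fun s => i ∈ (π s).take ⌈θ * (S.card : ℝ)⌉₊)).card : ℝ)) ∧
  (∀ j, j ∉ S →
    ((S.filter (fun s => j ∈ (π s).take ⌈θ * (S.card : ℝ)⌉₊)).card : ℝ) ≤ β * S.card)

theorem threshold_cut_le {x τ₁ c₁ τ₂ c₂ : ℝ} (hτ₁ : 0 ≤ τ₁) (hc₁ : 0 ≤ c₁) (hc₂ : c₂ ≤ 1)
    (h : τ₁ < τ₂ ∨ τ₁ = τ₂ ∧ c₂ ≤ c₁) :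
    (if τ₂ < x then x else if x = τ₂ then c₂ * x else 0) ≤
      (if τ₁ < x then x else if x = τ₁ then c₁ * x else 0) := by
  rcases h with h | ⟨rfl, hc⟩ <;> split_ifs <;> nlinarith

namespace IsCappedVote

variable {n : ℕ} {a : Fin n → ℝ} {W : ℝ} {b b' : Fin n → ℝ}

/-- Capped votes with the same budget are pointwise comparable (order the thresholds `τ`, ties
broken by the scaling factor `c`), and they have the same total, so they coincide. -/
theorem unique (h : IsCappedVote n a W b) (h' : IsCappedVote n a W b') : b = b' := by
  rcases h with ⟨hs, rfl⟩ | ⟨hs, τ, c, hτ, hc, hc1, hb, hsum⟩ <;>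
    rcases h' with ⟨hs', rfl⟩ | ⟨hs', τ', c', hτ', hc', hc1', hb', hsum'⟩
  · rfl
  · linarith
  · linarith
  have hcmp : (∀ j, b' j ≤ b j) ∨ ∀ j, b j ≤ b' j := by
    simp only [hb, hb']
    rcases lt_trichotomy τ τ' with hlt | rfl | hlt
    · exact .inl fun j => threshold_cut_le hτ hc hc1' (.inl hlt)
    · rcases le_total c' c with hle | hle
      · exact .inl fun j => threshold_cut_le hτ hc hc1' (.inr ⟨rfl, hle⟩)
      · exact .inr fun j => threshold_cut_le hτ hc' hc1 (.inr ⟨rfl, hle⟩)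
    · exact .inr fun j => threshold_cut_le hτ' hc' hc1 (.inl hlt)
  funext j
  rcases hcmp with hle | hle
  · exact ((sum_eq_sum_iff_of_le fun i _ => hle i).1 (hsum'.trans hsum.symm) j (mem_univ j)).symm
  · exact (sum_eq_sum_iff_of_le fun i _ => hle i).1 (hsum.trans hsum'.symm) j (mem_univ j)

theorem nonneg (ha : ∀ j, 0 ≤ a j) (h : IsCappedVote n a W b) (j : Fin n) : 0 ≤ b j := by
  rcases h with ⟨-, rfl⟩ | ⟨-, τ, c, -, hc, -, hb, -⟩
  · exact ha j
  · rw [hb]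
    split_ifs
    exacts [ha j, mul_nonneg hc (ha j), le_rfl]

theorem le (ha : ∀ j, 0 ≤ a j) (h : IsCappedVote n a W b) (j : Fin n) : b j ≤ a j := by
  rcases h with ⟨-, rfl⟩ | ⟨-, τ, c, -, -, hc, hb, -⟩
  · exact le_rfl
  · rw [hb]
    split_ifs
    exacts [le_rfl, mul_le_of_le_one_left (ha j) hc, ha j]

theorem sum_le (h : IsCappedVote n a W b) : ∑ j, b j ≤ W := by
  rcases h with ⟨hs, rfl⟩ | ⟨-, -, -, -, -, -, -, hsum⟩
  exacts [hs, hsum.le]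

end IsCappedVote

/-- The capped vote vector of `a` with budget `W`, when one exists (it is then unique);
`a` itself otherwise. -/
noncomputable def cappedVote {n : ℕ} (a : Fin n → ℝ) (W : ℝ) : Fin n → ℝ :=
  if h : ∃ b, IsCappedVote n a W b then h.choose else a

theorem cappedVote_eq_of_isCappedVote {n : ℕ} {a b : Fin n → ℝ} {W : ℝ}
    (h : IsCappedVote n a W b) : cappedVote a W = b := by
  have hex : ∃ b, IsCappedVote n a W b := ⟨b, h⟩
  rw [cappedVote, dif_pos hex]
  exact hex.choose_spec.unique h

section Cyclic

variable {k n : ℕ} [NeZero k]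

theorem card_filter_sub_val_lt_left {w : ℕ} (hw : w ≤ k) (q : Fin k) :
    #{r : Fin k | ((q - r : Fin k) : ℕ) < w} = w := by
  rw [card_equiv (Equiv.subLeft q) (t := {d : Fin k | (d : ℕ) < w}) (by simp),
    Fin.card_filter_val_lt, min_eq_right hw]

theorem card_filter_sub_val_lt_right {w : ℕ} (hw : w ≤ k) (r : Fin k) :
    #{q : Fin k | ((q - r : Fin k) : ℕ) < w} = w := by
  rw [card_equiv (Equiv.subRight r) (t := {d : Fin k | (d : ℕ) < w}) (by simp),
    Fin.card_filter_val_lt, min_eq_right hw]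

/-- Copy `r` of `s` votes for the copies `r, r + 1, …, r + w s j - 1 (mod k)` of `j`, so that
each copy of `j` receives exactly `w s j` votes from the `k` copies of `s`. -/
def CyclicVote (w : Fin n → Fin n → ℕ) (x y : Fin k × Fin n) : Prop :=
  ((y.1 - x.1 : Fin k) : ℕ) < w x.2 y.2

variable {w : Fin n → Fin n → ℕ}

theorem card_cyclicVote_out (hw : ∀ s j, w s j ≤ k) (x : Fin k × Fin n) :
    #{y | CyclicVote w x y} = ∑ j, w x.2 j := by
  rw [card_filter, Fintype.sum_prod_type_right]
  refine sum_congr rfl fun j _ => ?_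
  rw [← card_filter_sub_val_lt_right (hw x.2 j) x.1, card_filter]
  exact sum_congr rfl fun _ _ => if_congr Iff.rfl rfl rfl

theorem card_cyclicVote_in (hw : ∀ s j, w s j ≤ k) (S : Finset (Fin n)) (y : Fin k × Fin n) :
    #{x | x.2 ∈ S ∧ CyclicVote w x y} = ∑ s ∈ S, w s y.2 := by
  have hS : ({x | x.2 ∈ S ∧ CyclicVote w x y} : Finset (Fin k × Fin n)) =
      (univ ×ˢ S).filter fun x => CyclicVote w x y := by
    ext x
    simp
  rw [hS, card_filter, sum_product_right]
  refine sum_congr rfl fun s _ => ?_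
  rw [← card_filter_sub_val_lt_left (hw s y.2) y.1, card_filter]
  exact sum_congr rfl fun _ _ => if_congr Iff.rfl rfl rfl

end Cyclic

section BlowUp

variable {k n : ℕ}

def blowUpProj (x : Fin (k * n)) : Fin n := (finProdFinEquiv.symm x).2

theorem card_filter_blowUpProj_mem (S : Finset (Fin n)) :
    #{x : Fin (k * n) | blowUpProj x ∈ S} = k * #S := by
  rw [card_equiv finProdFinEquiv.symm (t := univ ×ˢ S) (by simp [blowUpProj]), card_product,
    card_univ, Fintype.card_fin]

theorem image_filter_blowUpProj_mem [NeZero k] (S : Finset (Fin n)) :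
    ({x : Fin (k * n) | blowUpProj x ∈ S} : Finset _).image blowUpProj = S := by
  ext v
  simp only [mem_image, mem_filter, mem_univ, true_and]
  exact ⟨fun ⟨x, hx, hxv⟩ => hxv ▸ hx,
    fun hv => ⟨finProdFinEquiv (0, v), by simpa [blowUpProj], by simp [blowUpProj]⟩⟩

variable (w : Fin n → Fin n → ℕ)

noncomputable def blowUpLists (x : Fin (k * n)) : List (Fin (k * n)) :=
  ({y | CyclicVote w (finProdFinEquiv.symm x) (finProdFinEquiv.symm y)} : Finset _).toList

variable {w} [NeZero k]

theorem length_blowUpLists (hw : ∀ s j, w s j ≤ k) (x : Fin (k * n)) :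
    (blowUpLists w x).length = ∑ j, w (blowUpProj x) j := by
  rw [blowUpLists, length_toList, card_equiv finProdFinEquiv.symm
    (t := {y | CyclicVote w (finProdFinEquiv.symm x) y}) (by simp), card_cyclicVote_out hw]
  rfl

theorem card_filter_mem_blowUpLists (hw : ∀ s j, w s j ≤ k) (S : Finset (Fin n))
    (y : Fin (k * n)) :
    #{x ∈ {x : Fin (k * n) | blowUpProj x ∈ S} | y ∈ blowUpLists w x} =
      ∑ s ∈ S, w s (blowUpProj y) := by
  rw [filter_filter, card_equiv finProdFinEquiv.symm
    (t := {x | x.2 ∈ S ∧ CyclicVote w x (finProdFinEquiv.symm y)})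
    (by simp [blowUpProj, blowUpLists]), card_cyclicVote_in hw]
  rfl

end BlowUp

theorem isListCommunity_iff_of_length_le {N : ℕ} {π : Fin N → List (Fin N)} {θ α β : ℝ}
    {S : Finset (Fin N)} (hlen : ∀ x, (π x).length ≤ ⌈θ * #S⌉₊) :
    IsListCommunity N π θ α β S ↔
      (∀ i ∈ S, α * #S ≤ #{s ∈ S | i ∈ π s}) ∧ ∀ j ∉ S, #{s ∈ S | j ∈ π s} ≤ β * #S := by
  simp only [IsListCommunity, List.take_of_length_le (hlen _)]

section Rounding

variable {ι : Type*} (S : Finset ι) (k : ℕ) {c : ι → ℝ}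

theorem sum_natFloor_mul_le (hc : ∀ s ∈ S, 0 ≤ c s) :
    ∑ s ∈ S, (⌊k * c s⌋₊ : ℝ) ≤ k * ∑ s ∈ S, c s := by
  rw [mul_sum]
  exact sum_le_sum fun s hs => Nat.floor_le (mul_nonneg k.cast_nonneg (hc s hs))

theorem mul_sum_sub_card_le_sum_natFloor :
    k * ∑ s ∈ S, c s - #S ≤ ∑ s ∈ S, (⌊k * c s⌋₊ : ℝ) := by
  have h := sum_le_sum fun s (_ : s ∈ S) => (Nat.sub_one_lt_floor ((k : ℝ) * c s)).le
  rwa [sum_sub_distrib, ← mul_sum, sum_const, nsmul_one] at h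

end Rounding

theorem one_le_mul_natCeil_one_div {ε : ℝ} (hε : 0 < ε) : 1 ≤ ε * ⌈1 / ε⌉₊ := by
  have := Nat.le_ceil (1 / ε)
  rw [div_le_iff₀ hε] at this
  linarith

section Rounded

variable {k n : ℕ} [NeZero k] {cap : Fin n → Fin n → ℝ} {θ α β ε : ℝ} {S : Finset (Fin n)}

theorem isListCommunity_blowUpLists (hcap₀ : ∀ s j, 0 ≤ cap s j) (hcap₁ : ∀ s j, cap s j ≤ 1)
    (hsum : ∀ s, ∑ j, cap s j ≤ θ * #S) (hin : ∀ i ∈ S, α * #S ≤ ∑ s ∈ S, cap s i)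
    (hout : ∀ j ∉ S, ∑ s ∈ S, cap s j ≤ β * #S) (hεk : 1 ≤ ε * k) :
    IsListCommunity (k * n) (blowUpLists fun s j => ⌊k * cap s j⌋₊) θ (α - ε) β
      {x | blowUpProj x ∈ S} := by
  have hw (s j) : ⌊k * cap s j⌋₊ ≤ k :=
    Nat.floor_le_of_le <| mul_le_of_le_one_right k.cast_nonneg (hcap₁ s j)
  have hcard := card_filter_blowUpProj_mem (k := k) S
  refine (isListCommunity_iff_of_length_le fun x => ?_).2 ⟨fun i hi => ?_, fun j hj => ?_⟩ <;>
    simp only [length_blowUpLists hw, card_filter_mem_blowUpLists hw, hcard, Nat.cast_sum,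
      Nat.cast_mul]
  · have h : ∑ j, (⌊k * cap (blowUpProj x) j⌋₊ : ℝ) ≤ θ * (k * #S) :=
      calc _ ≤ k * ∑ j, cap (blowUpProj x) j := sum_natFloor_mul_le univ k fun j _ => hcap₀ _ j
        _ ≤ k * (θ * #S) := by gcongr; exact hsum _
        _ = θ * (k * #S) := by ring
    exact_mod_cast h.trans (Nat.le_ceil _)
  · calc (α - ε) * (k * #S) ≤ k * (α * #S) - #S := by
          nlinarith [mul_nonneg (sub_nonneg.2 hεk) (#S).cast_nonneg]
      _ ≤ k * ∑ s ∈ S, cap s (blowUpProj i) - #S := by gcongr; exact hin _ (mem_filter.1 hi).2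
      _ ≤ _ := mul_sum_sub_card_le_sum_natFloor S k
  · calc ∑ s ∈ S, (⌊k * cap s (blowUpProj j)⌋₊ : ℝ) ≤ k * ∑ s ∈ S, cap s (blowUpProj j) :=
          sum_natFloor_mul_le S k fun s _ => hcap₀ s _
      _ ≤ k * (β * #S) := by gcongr; exact hout _ fun hjS => hj (mem_filter.2 ⟨mem_univ _, hjS⟩)
      _ = β * (k * #S) := by ring

end Rounded

theorem stmt_18_general (n : ℕ) (a : Fin n → Fin n → ℝ)
    (ha : ∀ i j, 0 ≤ a i j ∧ a i j ≤ 1)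
    (θ α β ε : ℝ)
    (hε0 : 0 < ε) (t : ℕ) (k : ℕ) (hk : k = ⌈1 / ε⌉₊) :
    ∃ (π : Fin (k * n) → List (Fin (k * n))) (f : Fin (k * n) → Fin n),
      (∀ i, (π i).Nodup) ∧
      (∀ v : Fin n, (Finset.univ.filter (fun x => f x = v)).card = k) ∧
      ∀ S : Finset (Fin n), S.card = t → IsWeightedCommunity n a θ α β S →
        (Finset.univ.filter (fun x => f x ∈ S)).card = k * t ∧
        IsListCommunity (k * n) π θ (α - ε) β (Finset.univ.filter (fun x => f x ∈ S)) ∧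
        (Finset.univ.filter (fun x => f x ∈ S)).image f = S := by
  have : NeZero k := ⟨hk ▸ (Nat.ceil_pos.2 (one_div_pos.2 hε0)).ne'⟩
  have hεk : 1 ≤ ε * k := hk ▸ one_le_mul_natCeil_one_div hε0
  refine ⟨blowUpLists fun s j => ⌊k * cappedVote (a s) (θ * t) j⌋₊, blowUpProj,
    fun x => nodup_toList _, fun v => by simpa using card_filter_blowUpProj_mem (k := k) {v},
    fun S hS ⟨cap, hcap, hin, hout⟩ => ⟨hS ▸ card_filter_blowUpProj_mem S, ?_,
      image_filter_blowUpProj_mem S⟩⟩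
  have ha₀ (s) : ∀ j, 0 ≤ a s j := fun j => (ha s j).1
  have hcp (s) : cappedVote (a s) (θ * t) = cap s := cappedVote_eq_of_isCappedVote (hS ▸ hcap s)
  simp only [hcp]
  exact isListCommunity_blowUpLists (fun s => (hcap s).nonneg (ha₀ s))
    (fun s j => ((hcap s).le (ha₀ s) j).trans (ha s j).2) (fun s => (hcap s).sum_le) hin hout hεk

theorem stmt_18 (n : ℕ) (a : Fin n → Fin n → ℝ)
    (ha : ∀ i j, 0 ≤ a i j ∧ a i j ≤ 1)
    (θ α β ε : ℝ) (hθ : 0 < θ) (hβ : 0 ≤ β) (hβα : β < α) (hα : α ≤ 1)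
    (hε0 : 0 < ε) (hεα : ε < α) (t : ℕ) (k : ℕ) (hk : k = ⌈1 / ε⌉₊) :
    ∃ (π : Fin (k * n) → List (Fin (k * n))) (f : Fin (k * n) → Fin n),
      (∀ i, (π i).Nodup) ∧
      (∀ v : Fin n, (Finset.univ.filter (fun x => f x = v)).card = k) ∧
      ∀ S : Finset (Fin n), S.card = t → IsWeightedCommunity n a θ α β S →
        (Finset.univ.filter (fun x => f x ∈ S)).card = k * t ∧
        IsListCommunity (k * n) π θ (α - ε) β (Finset.univ.filter (fun x => f x ∈ S)) ∧
        (Finset.univ.filter (fun x => f x ∈ S)).image f = S :=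
  stmt_18_general n a ha θ α β ε hε0 t k hk
end

section
/- Let (V, {π_i^1,…,π_i^f}_{i∈V}) be an f-faceted affinity system on n elements, let 0 ≤ β < α ≤ 1 and θ > 0 with γ = α − β > 0, and let S ⊆ V with |S| = t > 8 ln n / γ². Suppose ψ_f : S × {1,…,f} → [0,1] is a fractional facet assignment satisfying: (1) Σ_{i=1}^f ψ_f(s,i) = 1 for all s ∈ S; (2) Σ_{s∈S} Σ_{i=1}^f ψ_f(s,i)·χ[x ∈ π_s^i(1:⌈θt⌉)] ≥ αt for all x ∈ S; and (3) Σ_{s∈S} Σ_{i=1}^f ψ_f(s,i)·χ[y ∈ π_s^i(1:⌈θt⌉)] < βt for all y ∉ S. If ψ' : S → {1,…,f} is obtained by independently setting ψ'(s) = i with probability ψ_f(s,i), then with positive probability (S, ψ') is an (α − γ/4, β + γ/4, θ)-multifaceted community; in particular such an integral facet assignment ψ' exists. -/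
open Finset
open scoped Classical

/-- The set of the `t` top-ranked elements of the `j`-th ranking of member `s` in an
`f`-faceted affinity system. -/
def topSetF (n f : ℕ) (π : Fin n → Fin f → Equiv.Perm (Fin n)) (s : Fin n) (j : Fin f)
    (t : ℕ) : Finset (Fin n) :=
  Finset.univ.filter (fun x => (((π s j).symm x : ℕ) < t))

/-- `φ^θ_{S,ψ}(i)`: the number of members `s` of `S` ranking `i` among the top
`⌈θ|S|⌉` elements of their facet `ψ s`. -/
noncomputable def facetVotes (n f : ℕ) (π : Fin n → Fin f → Equiv.Perm (Fin n)) (θ : ℝ)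
    (S : Finset (Fin n)) (ψ : Fin n → Fin f) (i : Fin n) : ℕ :=
  (S.filter (fun s => i ∈ topSetF n f π s (ψ s) ⌈θ * (S.card : ℝ)⌉₊)).card

/-- `(S, ψ)` is an `(α, β, θ)`-multifaceted community. -/
def IsMFCommunity (n f : ℕ) (π : Fin n → Fin f → Equiv.Perm (Fin n)) (α β θ : ℝ)
    (S : Finset (Fin n)) (ψ : Fin n → Fin f) : Prop :=
  (∀ i ∈ S, α * S.card ≤ (facetVotes n f π θ S ψ i : ℝ)) ∧
  (∀ j, j ∉ S → (facetVotes n f π θ S ψ j : ℝ) < β * S.card)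

/-! Round `ψf` independently at every `s ∈ S`. For a fixed `x`, the vote count of `x` is a sum
of `|S| = t` independent `{0,1}`-valued variables whose mean is the fractional count, at least
`α t` if `x ∈ S` and below `β t` otherwise. By Hoeffding's lemma `1 - p + p eᵏ ≤ e^(k p + k²/8)`
and Markov's inequality applied to `e^(∓γ · votes)`, each `x` misses its threshold shifted by
`γ t / 4` with probability at most `e^(-γ² t / 8) < 1 / n`, so a union bound over the `n` elements
leaves positive probability. Probabilities are weighted sums over all `ψ' : Fin n → Fin f`; the
coordinates outside `S` are unconstrained, so every weight sum carries the factor `f ^ #Sᶜ`. -/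

open ProbabilityTheory MeasureTheory unitInterval in
theorem one_sub_add_mul_exp_le (p : ℝ) (hp0 : 0 ≤ p) (hp1 : p ≤ 1) (l : ℝ) :
    1 - p + p * Real.exp l ≤ Real.exp (l * p + l ^ 2 / 8) := by
  set q : I := ⟨p, hp0, hp1⟩
  let X : Bool → ℝ := fun b => if b then 1 else 0
  have hmean : ∫ b, X b ∂Ber(true, false, q) = p := by
    simp [integral_bernoulliMeasure, q, X]
  have hmgf := (hasSubgaussianMGF_of_mem_Icc (a := 0) (b := 1) (μ := Ber(true, false, q))
    (measurable_of_countable X).aemeasurable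
    (ae_of_all _ fun b => by cases b <;> simp [X])).mgf_le l
  simp only [mgf, integral_bernoulliMeasure, hmean] at hmgf
  norm_num [X] at hmgf
  calc 1 - p + p * Real.exp l
      = Real.exp (l * p) * (p * Real.exp (l * (1 - p)) + (1 - p) * Real.exp (-(l * p))) := by
        rw [mul_add, mul_left_comm, ← Real.exp_add, mul_left_comm, ← Real.exp_add,
          add_neg_cancel, Real.exp_zero]
        ring_nf
    _ ≤ Real.exp (l * p) * Real.exp (1 / 4 * l ^ 2 / 2) := by gcongr
    _ = Real.exp (l * p + l ^ 2 / 8) := by rw [← Real.exp_add]; ring_nf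

section
variable {κ : Type*} [Fintype κ]

theorem sum_mul_exp_le (P a : κ → ℝ) (hP0 : ∀ i, 0 ≤ P i) (hP1 : ∑ i, P i = 1)
    (ha : ∀ i, a i ∈ Set.Icc 0 1) (l : ℝ) :
    ∑ i, P i * Real.exp (l * a i) ≤ Real.exp (l * ∑ i, P i * a i + l ^ 2 / 8) := by
  have hexp : ∀ i, Real.exp (l * a i) ≤ 1 - a i + a i * Real.exp l := fun i => by
    simpa [smul_eq_mul, mul_comm] using convexOn_exp.2 (Set.mem_univ 0) (Set.mem_univ l)
      (sub_nonneg.2 (ha i).2) (ha i).1 (sub_add_cancel 1 (a i))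
  have hp0 : 0 ≤ ∑ i, P i * a i := sum_nonneg fun i _ => mul_nonneg (hP0 i) (ha i).1
  have hp1 : ∑ i, P i * a i ≤ 1 :=
    hP1 ▸ sum_le_sum fun i _ => mul_le_of_le_one_right (hP0 i) (ha i).2
  calc ∑ i, P i * Real.exp (l * a i)
      ≤ ∑ i, P i * (1 - a i + a i * Real.exp l) :=
        sum_le_sum fun i _ => mul_le_mul_of_nonneg_left (hexp i) (hP0 i)
    _ = 1 - ∑ i, P i * a i + (∑ i, P i * a i) * Real.exp l := by
        simp only [mul_add, mul_sub, sum_add_distrib, sum_sub_distrib, mul_one, hP1, sum_mul,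
          mul_assoc]
    _ ≤ _ := one_sub_add_mul_exp_le _ hp0 hp1 l

variable {ι R : Type*} [Fintype ι] [DecidableEq ι]

theorem sum_pi_prod_eq [CommSemiring R] (S : Finset ι) (g : ι → κ → R) :
    ∑ ψ : ι → κ, ∏ s ∈ S, g s (ψ s)
      = (Fintype.card κ : R) ^ #Sᶜ * ∏ s ∈ S, ∑ i, g s i := by
  calc ∑ ψ : ι → κ, ∏ s ∈ S, g s (ψ s)
      = ∑ ψ : ι → κ, ∏ s, if s ∈ S then g s (ψ s) else 1 := by
        simp only [prod_ite_mem, univ_inter]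
    _ = ∏ s, ∑ i, if s ∈ S then g s i else 1 :=
        (Fintype.prod_sum fun s i => if s ∈ S then g s i else 1).symm
    _ = _ := by
        rw [← prod_mul_prod_compl S, mul_comm]
        congr 1
        · rw [← prod_const]
          exact prod_congr rfl fun s hs => by simp [mem_compl.mp hs]
        · exact prod_congr rfl fun s hs => by simp [hs]

variable {S : Finset ι} {P a : ι → κ → ℝ}

theorem sum_prod_mul_exp_le (hP0 : ∀ s ∈ S, ∀ i, 0 ≤ P s i) (hP1 : ∀ s ∈ S, ∑ i, P s i = 1)
    (ha : ∀ s ∈ S, ∀ i, a s i ∈ Set.Icc 0 1) (l : ℝ) :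
    ∑ ψ : ι → κ, (∏ s ∈ S, P s (ψ s)) * Real.exp (l * ∑ s ∈ S, a s (ψ s))
      ≤ (Fintype.card κ : ℝ) ^ #Sᶜ
        * Real.exp (l * ∑ s ∈ S, ∑ i, P s i * a s i + l ^ 2 * #S / 8) := by
  calc ∑ ψ : ι → κ, (∏ s ∈ S, P s (ψ s)) * Real.exp (l * ∑ s ∈ S, a s (ψ s))
      = ∑ ψ : ι → κ, ∏ s ∈ S, P s (ψ s) * Real.exp (l * a s (ψ s)) := by
        simp only [mul_sum, Real.exp_sum, prod_mul_distrib]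
    _ = (Fintype.card κ : ℝ) ^ #Sᶜ * ∏ s ∈ S, ∑ i, P s i * Real.exp (l * a s i) :=
        sum_pi_prod_eq S fun s i => P s i * Real.exp (l * a s i)
    _ ≤ (Fintype.card κ : ℝ) ^ #Sᶜ * ∏ s ∈ S, Real.exp (l * ∑ i, P s i * a s i + l ^ 2 / 8) := by
        refine mul_le_mul_of_nonneg_left (prod_le_prod ?_ ?_) (by positivity)
        · exact fun s hs => sum_nonneg fun i _ => mul_nonneg (hP0 s hs i) (Real.exp_pos _).le
        · exact fun s hs => sum_mul_exp_le _ _ (hP0 s hs) (hP1 s hs) (ha s hs) l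
    _ = _ := by
        rw [← Real.exp_sum, sum_add_distrib, ← mul_sum, sum_const, nsmul_eq_mul]
        ring_nf

theorem chernoff_sum_filter_prod_le (hP0 : ∀ s ∈ S, ∀ i, 0 ≤ P s i) (hP1 : ∀ s ∈ S, ∑ i, P s i = 1)
    (ha : ∀ s ∈ S, ∀ i, a s i ∈ Set.Icc 0 1) (E : (ι → κ) → Prop) [DecidablePred E] (c l : ℝ)
    (hE : ∀ ψ, E ψ → l * c ≤ l * ∑ s ∈ S, a s (ψ s)) :
    ∑ ψ with E ψ, ∏ s ∈ S, P s (ψ s)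
      ≤ (Fintype.card κ : ℝ) ^ #Sᶜ
        * Real.exp (l * (∑ s ∈ S, ∑ i, P s i * a s i - c) + l ^ 2 * #S / 8) := by
  have hw : ∀ ψ : ι → κ, 0 ≤ ∏ s ∈ S, P s (ψ s) := fun ψ =>
    prod_nonneg fun s hs => hP0 s hs (ψ s)
  calc ∑ ψ with E ψ, ∏ s ∈ S, P s (ψ s)
      ≤ ∑ ψ with E ψ, (∏ s ∈ S, P s (ψ s)) * Real.exp (l * ∑ s ∈ S, a s (ψ s) - l * c) := by
        refine sum_le_sum fun ψ hψ => le_mul_of_one_le_right (hw ψ) (Real.one_le_exp ?_)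
        linarith [hE ψ (mem_filter.mp hψ).2]
    _ ≤ ∑ ψ : ι → κ, (∏ s ∈ S, P s (ψ s)) * Real.exp (l * ∑ s ∈ S, a s (ψ s) - l * c) :=
        sum_le_sum_of_subset_of_nonneg (filter_subset _ _) fun ψ _ _ =>
          mul_nonneg (hw ψ) (Real.exp_pos _).le
    _ = Real.exp (-(l * c)) *
          ∑ ψ : ι → κ, (∏ s ∈ S, P s (ψ s)) * Real.exp (l * ∑ s ∈ S, a s (ψ s)) := by
        simp only [mul_sum, sub_eq_add_neg, Real.exp_add]
        exact sum_congr rfl fun ψ _ => by ring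
    _ ≤ Real.exp (-(l * c)) * ((Fintype.card κ : ℝ) ^ #Sᶜ
          * Real.exp (l * ∑ s ∈ S, ∑ i, P s i * a s i + l ^ 2 * #S / 8)) := by
        gcongr
        exact sum_prod_mul_exp_le hP0 hP1 ha l
    _ = _ := by
        rw [mul_left_comm, ← Real.exp_add]
        ring_nf

end

theorem sum_filter_pos_of_union_bound {Ω X : Type*} [Fintype Ω] [Fintype X] {w : Ω → ℝ}
    (hw : ∀ ω, 0 ≤ w ω) (G : Ω → Prop) [DecidablePred G] (B : X → Ω → Prop)
    [∀ x, DecidablePred (B x)] (hGB : ∀ ω, ¬G ω → ∃ x, B x ω) {ε : ℝ}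
    (hB : ∀ x, ∑ ω with B x ω, w ω ≤ ε) (hε : Fintype.card X * ε < ∑ ω, w ω) :
    0 < ∑ ω with G ω, w ω := by
  have hsum_nonneg : ∀ ω, 0 ≤ ∑ x, if B x ω then w ω else 0 := fun ω =>
    sum_nonneg fun x _ => by split_ifs <;> simp [hw]
  have hcover : ∀ ω, ¬G ω → w ω ≤ ∑ x, if B x ω then w ω else 0 := fun ω hG => by
    obtain ⟨x, hx⟩ := hGB ω hG
    calc w ω = if B x ω then w ω else 0 := (if_pos hx).symm
      _ ≤ _ := single_le_sum (f := fun x => if B x ω then w ω else 0)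
          (fun x _ => by split_ifs <;> simp [hw]) (mem_univ x)
  have hbad : ∑ ω with ¬G ω, w ω ≤ Fintype.card X * ε :=
    calc ∑ ω with ¬G ω, w ω ≤ ∑ ω with ¬G ω, ∑ x, if B x ω then w ω else 0 :=
          sum_le_sum fun ω hω => hcover ω (mem_filter.1 hω).2
      _ ≤ ∑ ω, ∑ x, if B x ω then w ω else 0 :=
          sum_le_sum_of_subset_of_nonneg (filter_subset _ _) fun ω _ _ => hsum_nonneg ω
      _ = ∑ x, ∑ ω with B x ω, w ω := by rw [sum_comm]; simp only [sum_filter]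
      _ ≤ Fintype.card X * ε := by
          simpa using sum_le_sum fun x (_ : x ∈ univ) => hB x
  linarith [sum_filter_add_sum_filter_not univ G w]

theorem natCast_mul_exp_neg_lt_one {n : ℕ} {c : ℝ} (h : Real.log n < c) :
    (n : ℝ) * Real.exp (-c) < 1 := by
  rcases n.eq_zero_or_pos with rfl | hn
  · simp
  rw [Real.exp_neg, ← div_eq_mul_inv, div_lt_one (Real.exp_pos c)]
  exact (Real.log_lt_iff_lt_exp (by exact_mod_cast hn)).1 h

section
variable {n f : ℕ} {π : Fin n → Fin f → Equiv.Perm (Fin n)} {θ : ℝ} {S : Finset (Fin n)}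

theorem facetVotes_eq_sum (ψ : Fin n → Fin f) (x : Fin n) :
    (facetVotes n f π θ S ψ x : ℝ)
      = ∑ s ∈ S, if x ∈ topSetF n f π s (ψ s) ⌈θ * (#S : ℝ)⌉₊ then 1 else 0 := by
  rw [facetVotes, card_filter, Nat.cast_sum]
  simp only [Nat.cast_ite, Nat.cast_one, Nat.cast_zero]

def ViolatesMFCommunity (n f : ℕ) (π : Fin n → Fin f → Equiv.Perm (Fin n)) (α β θ : ℝ)
    (S : Finset (Fin n)) (ψ : Fin n → Fin f) (x : Fin n) : Prop :=
  if x ∈ S then (facetVotes n f π θ S ψ x : ℝ) < α * #S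
  else β * #S ≤ (facetVotes n f π θ S ψ x : ℝ)

theorem exists_violatesMFCommunity_of_not_isMFCommunity {α β : ℝ} {ψ : Fin n → Fin f}
    (h : ¬IsMFCommunity n f π α β θ S ψ) : ∃ x, ViolatesMFCommunity n f π α β θ S ψ x := by
  simp only [IsMFCommunity, not_and_or, not_forall, not_le, not_lt, exists_prop] at h
  rcases h with ⟨x, hx, hlt⟩ | ⟨x, hx, hle⟩
  · exact ⟨x, by rwa [ViolatesMFCommunity, if_pos hx]⟩
  · exact ⟨x, by rwa [ViolatesMFCommunity, if_neg hx]⟩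

theorem sum_filter_violatesMFCommunity_le {α β γ : ℝ} (hγ : 0 ≤ γ) {P : Fin n → Fin f → ℝ}
    (hP0 : ∀ s ∈ S, ∀ i, 0 ≤ P s i) (hP1 : ∀ s ∈ S, ∑ i, P s i = 1) (x : Fin n)
    (hin : x ∈ S → α * #S ≤
      ∑ s ∈ S, ∑ i, P s i * if x ∈ topSetF n f π s i ⌈θ * (#S : ℝ)⌉₊ then 1 else 0)
    (hout : x ∉ S →
      ∑ s ∈ S, ∑ i, P s i * (if x ∈ topSetF n f π s i ⌈θ * (#S : ℝ)⌉₊ then 1 else 0)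
        ≤ β * #S) :
    ∑ ψ with ViolatesMFCommunity n f π (α - γ / 4) (β + γ / 4) θ S ψ x, ∏ s ∈ S, P s (ψ s)
      ≤ (f : ℝ) ^ #Sᶜ * Real.exp (-(γ ^ 2 * #S / 8)) := by
  have ha : ∀ s ∈ S, ∀ i, (if x ∈ topSetF n f π s i ⌈θ * (#S : ℝ)⌉₊ then 1 else 0 : ℝ)
      ∈ Set.Icc 0 1 := fun s _ i => by split_ifs <;> simp
  by_cases hx : x ∈ S
  · refine (chernoff_sum_filter_prod_le hP0 hP1 ha _ ((α - γ / 4) * #S) (-γ)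
      fun ψ hψ => ?_).trans ?_
    · rw [ViolatesMFCommunity, if_pos hx, facetVotes_eq_sum] at hψ
      exact mul_le_mul_of_nonpos_left hψ.le (neg_nonpos.2 hγ)
    · rw [Fintype.card_fin]
      gcongr
      nlinarith [mul_le_mul_of_nonneg_left (hin hx) hγ]
  · refine (chernoff_sum_filter_prod_le hP0 hP1 ha _ ((β + γ / 4) * #S) γ
      fun ψ hψ => ?_).trans ?_
    · rw [ViolatesMFCommunity, if_neg hx, facetVotes_eq_sum] at hψ
      exact mul_le_mul_of_nonneg_left hψ hγ
    · rw [Fintype.card_fin]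
      gcongr
      nlinarith [mul_le_mul_of_nonneg_left (hout hx) hγ]

end

theorem stmt_19_general (n f : ℕ) (π : Fin n → Fin f → Equiv.Perm (Fin n))
    (α β θ γ : ℝ) (hβα : β < α)
    (hγ : γ = α - β)
    (S : Finset (Fin n)) (t : ℕ) (ht : t = S.card)
    (htLarge : 8 * Real.log n / γ ^ 2 < (t : ℝ))
    (ψf : Fin n → Fin f → ℝ)
    (hψ01 : ∀ s ∈ S, ∀ i : Fin f, 0 ≤ ψf s i ∧ ψf s i ≤ 1)
    (hψsum : ∀ s ∈ S, (∑ i : Fin f, ψf s i) = 1)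
    (hin : ∀ x ∈ S, α * t ≤
      ∑ s ∈ S, ∑ i : Fin f, ψf s i *
        (if x ∈ topSetF n f π s i ⌈θ * (t : ℝ)⌉₊ then 1 else 0))
    (hout : ∀ y, y ∉ S →
      (∑ s ∈ S, ∑ i : Fin f, ψf s i *
        (if y ∈ topSetF n f π s i ⌈θ * (t : ℝ)⌉₊ then 1 else 0)) < β * t) :
    (0 < ∑ ψ' : Fin n → Fin f, (∏ s ∈ S, ψf s (ψ' s)) *
        (if IsMFCommunity n f π (α - γ / 4) (β + γ / 4) θ S ψ' then 1 else 0)) ∧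
    ∃ ψ' : Fin n → Fin f, IsMFCommunity n f π (α - γ / 4) (β + γ / 4) θ S ψ' := by
  subst ht
  have hγ0 : 0 < γ := by linarith
  have hlog : Real.log n < γ ^ 2 * #S / 8 := by
    rw [div_lt_iff₀ (by positivity)] at htLarge
    linarith
  obtain ⟨s₀, hs₀⟩ : S.Nonempty := card_pos.1 <| by
    have := Real.log_natCast_nonneg n
    exact_mod_cast (show (0 : ℝ) < #S by nlinarith)
  have hf : 0 < f := Nat.pos_of_ne_zero fun h0 => by subst h0; simpa using hψsum s₀ hs₀
  have hP0 : ∀ s ∈ S, ∀ i, 0 ≤ ψf s i := fun s hs i => (hψ01 s hs i).1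
  have hmass : ∑ ψ : Fin n → Fin f, ∏ s ∈ S, ψf s (ψ s) = (f : ℝ) ^ #Sᶜ := by
    rw [sum_pi_prod_eq, prod_congr rfl hψsum, prod_const_one, mul_one, Fintype.card_fin]
  have hsmall : Fintype.card (Fin n) * ((f : ℝ) ^ #Sᶜ * Real.exp (-(γ ^ 2 * #S / 8)))
      < ∑ ψ : Fin n → Fin f, ∏ s ∈ S, ψf s (ψ s) := by
    rw [hmass, Fintype.card_fin, mul_left_comm]
    exact mul_lt_of_lt_one_right (by positivity) (natCast_mul_exp_neg_lt_one hlog)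
  have hpos := sum_filter_pos_of_union_bound (fun ψ => prod_nonneg fun s hs => hP0 s hs (ψ s))
    (IsMFCommunity n f π (α - γ / 4) (β + γ / 4) θ S)
    (fun x ψ => ViolatesMFCommunity n f π (α - γ / 4) (β + γ / 4) θ S ψ x)
    (fun ψ => exists_violatesMFCommunity_of_not_isMFCommunity)
    (fun x => sum_filter_violatesMFCommunity_le hγ0.le hP0 hψsum x (hin x) fun hx => (hout x hx).le)
    hsmall
  refine ⟨by simpa only [mul_ite, mul_one, mul_zero, sum_filter] using hpos, ?_⟩
  obtain ⟨ψ, hψ⟩ := nonempty_of_sum_ne_zero hpos.ne'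
  exact ⟨ψ, (mem_filter.1 hψ).2⟩

theorem stmt_19 (n f : ℕ) (π : Fin n → Fin f → Equiv.Perm (Fin n))
    (α β θ γ : ℝ) (hβ : 0 ≤ β) (hβα : β < α) (hα : α ≤ 1) (hθ : 0 < θ)
    (hγ : γ = α - β)
    (S : Finset (Fin n)) (t : ℕ) (ht : t = S.card)
    (htLarge : 8 * Real.log n / γ ^ 2 < (t : ℝ))
    (ψf : Fin n → Fin f → ℝ)
    (hψ01 : ∀ s ∈ S, ∀ i : Fin f, 0 ≤ ψf s i ∧ ψf s i ≤ 1)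
    (hψsum : ∀ s ∈ S, (∑ i : Fin f, ψf s i) = 1)
    (hin : ∀ x ∈ S, α * t ≤
      ∑ s ∈ S, ∑ i : Fin f, ψf s i *
        (if x ∈ topSetF n f π s i ⌈θ * (t : ℝ)⌉₊ then 1 else 0))
    (hout : ∀ y, y ∉ S →
      (∑ s ∈ S, ∑ i : Fin f, ψf s i *
        (if y ∈ topSetF n f π s i ⌈θ * (t : ℝ)⌉₊ then 1 else 0)) < β * t) :
    (0 < ∑ ψ' : Fin n → Fin f, (∏ s ∈ S, ψf s (ψ' s)) *
        (if IsMFCommunity n f π (α - γ / 4) (β + γ / 4) θ S ψ' then 1 else 0)) ∧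
    ∃ ψ' : Fin n → Fin f, IsMFCommunity n f π (α - γ / 4) (β + γ / 4) θ S ψ' :=
  stmt_19_general n f π α β θ γ hβα hγ S t ht htLarge ψf hψ01 hψsum hin hout
end
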